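/- arXiv:1709.03040 — 11 statements merged into one kernel-verified Lean document; each statement's English description precedes it below -/
import Mathlib

section
/- Let p be a polynomial of degree n with complex coefficients, a_n ≠ 0, and let k be the smallest positive integer with a_{n-k} ≠ 0 (assume some such k exists). Then ρ[(a_n z^k − a_{n-k}) p(z)] ≤ ρ[p], where ρ[·] denotes the Cauchy radius. -/
open Polynomial

/-!
Write `C_q(x) = ‖c_m‖ xᵐ - ∑_{j<m} ‖c_j‖ xʲ`. For `t > 1` one has `C_q(t y) > tᵐ C_q(y)` as soon
as some lower coefficient is nonzero, so `C_q < 0` on `(0, ρ[q])` and it suffices to show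
`C_q(y) ≥ 0` at `y = ρ[p]` for `q = (aₙ zᵏ - aₙ₋ₖ) p`. The coefficients of `q` are
`aₙ a_{j-k} - aₙ₋ₖ a_j`; those of index `n, …, n + k - 1` vanish by the choice of `k`, and the
triangle inequality together with `∑_{j<n} ‖a_j‖ yʲ = ‖aₙ‖ yⁿ` bounds the remaining lower sum by
`‖aₙ‖² y^{n+k}`.
-/

/-- The function whose unique positive root is the Cauchy radius of `q`. -/
noncomputable def cauchyFun (q : Polynomial ℂ) (x : ℝ) : ℝ :=
  ‖q.leadingCoeff‖ * x ^ q.natDegree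
    - ∑ j ∈ Finset.range q.natDegree, ‖q.coeff j‖ * x ^ j

section CoeffNormSum

variable {R : Type*} [NormedRing R]

noncomputable def coeffNormSum (N : ℕ) (p : R[X]) (y : ℝ) : ℝ :=
  ∑ j ∈ Finset.range N, ‖p.coeff j‖ * y ^ j

theorem coeffNormSum_sub_le (N : ℕ) (p q : R[X]) {y : ℝ} (hy : 0 ≤ y) :
    coeffNormSum N (p - q) y ≤ coeffNormSum N p y + coeffNormSum N q y := by
  rw [coeffNormSum, coeffNormSum, coeffNormSum, ← Finset.sum_add_distrib]
  gcongr with j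
  rw [coeff_sub, ← add_mul]
  gcongr
  exact norm_sub_le _ _

theorem coeffNormSum_C_mul_le (N : ℕ) (c : R) (p : R[X]) {y : ℝ} (hy : 0 ≤ y) :
    coeffNormSum N (C c * p) y ≤ ‖c‖ * coeffNormSum N p y := by
  rw [coeffNormSum, coeffNormSum, Finset.mul_sum]
  refine Finset.sum_le_sum fun j _ => ?_
  rw [coeff_C_mul, ← mul_assoc]
  exact mul_le_mul_of_nonneg_right (norm_mul_le _ _) (pow_nonneg hy j)

theorem coeffNormSum_X_pow_mul {k N : ℕ} (hkN : k ≤ N) (p : R[X]) (y : ℝ) :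
    coeffNormSum N (X ^ k * p) y = y ^ k * coeffNormSum (N - k) p y := by
  obtain ⟨M, rfl⟩ := Nat.exists_eq_add_of_le hkN
  have hlow : ∑ j ∈ Finset.range k, ‖(X ^ k * p).coeff j‖ * y ^ j = 0 :=
    Finset.sum_eq_zero fun j hj => by
      rw [coeff_X_pow_mul', if_neg (by simpa using hj), norm_zero, zero_mul]
  rw [coeffNormSum, coeffNormSum, Finset.sum_range_add, hlow, zero_add, Nat.add_sub_cancel_left,
    Finset.mul_sum]
  refine Finset.sum_congr rfl fun i _ => ?_
  rw [coeff_X_pow_mul', if_pos (Nat.le_add_right k i), Nat.add_sub_cancel_left, pow_add]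
  ring

theorem coeffNormSum_succ (N : ℕ) (p : R[X]) (y : ℝ) :
    coeffNormSum (N + 1) p y = coeffNormSum N p y + ‖p.coeff N‖ * y ^ N :=
  Finset.sum_range_succ _ _

theorem coeffNormSum_eq_of_coeff_eq_zero {M N : ℕ} (hMN : M ≤ N) {p : R[X]}
    (hp : ∀ j, M ≤ j → j < N → p.coeff j = 0) (y : ℝ) :
    coeffNormSum N p y = coeffNormSum M p y := by
  refine (Finset.sum_subset (Finset.range_subset_range.mpr hMN) fun j hjN hjM => ?_).symm
  simp only [Finset.mem_range, not_lt] at hjN hjM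
  rw [hp j hjM hjN, norm_zero, zero_mul]

theorem coeffNormSum_mul_lt {N : ℕ} {p : R[X]} (hp : ∃ j < N, p.coeff j ≠ 0) {t y : ℝ}
    (ht : 1 < t) (hy : 0 < y) :
    coeffNormSum N p (t * y) < t ^ N * coeffNormSum N p y := by
  obtain ⟨j₀, hj₀N, hj₀⟩ := hp
  rw [coeffNormSum, coeffNormSum, Finset.mul_sum]
  refine Finset.sum_lt_sum (fun j hj => ?_) ⟨j₀, Finset.mem_range.mpr hj₀N, ?_⟩
  · rw [mul_pow, mul_left_comm]
    have := (Finset.mem_range.mp hj).le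
    gcongr
    exact ht.le
  · rw [mul_pow, mul_left_comm]
    have := norm_pos_iff.mpr hj₀
    gcongr

end CoeffNormSum

section CauchyFun

variable {q : ℂ[X]}

theorem cauchyFun_eq_sub_coeffNormSum (q : ℂ[X]) (x : ℝ) :
    cauchyFun q x = ‖q.leadingCoeff‖ * x ^ q.natDegree - coeffNormSum q.natDegree q x :=
  rfl

theorem exists_coeff_ne_zero_of_cauchyFun_eq_zero (hq : q ≠ 0) {x : ℝ} (hx : 0 < x)
    (hqx : cauchyFun q x = 0) : ∃ j < q.natDegree, q.coeff j ≠ 0 := by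
  by_contra! h
  have hsum : coeffNormSum q.natDegree q x = 0 :=
    Finset.sum_eq_zero fun j hj => by rw [h j (Finset.mem_range.mp hj), norm_zero, zero_mul]
  rw [cauchyFun_eq_sub_coeffNormSum, hsum, sub_zero] at hqx
  have : 0 < ‖q.leadingCoeff‖ := norm_pos_iff.mpr (leadingCoeff_ne_zero.mpr hq)
  exact (mul_pos this (pow_pos hx _)).ne' hqx

theorem le_of_cauchyFun_eq_zero_of_nonneg (hq : q ≠ 0) {x y : ℝ} (hx : 0 < x) (hy : 0 < y)
    (hqx : cauchyFun q x = 0) (hqy : 0 ≤ cauchyFun q y) : x ≤ y := by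
  by_contra! hyx
  have ht : 1 < x / y := (one_lt_div hy).mpr hyx
  have hlt := coeffNormSum_mul_lt (exists_coeff_ne_zero_of_cauchyFun_eq_zero hq hx hqx) ht hy
  rw [div_mul_cancel₀ x hy.ne'] at hlt
  have hxt : x ^ q.natDegree = (x / y) ^ q.natDegree * y ^ q.natDegree := by
    rw [← mul_pow, div_mul_cancel₀ x hy.ne']
  rw [cauchyFun_eq_sub_coeffNormSum] at hqx hqy
  rw [hxt] at hqx
  nlinarith [mul_nonneg (pow_pos (one_pos.trans ht) q.natDegree).le hqy]

end CauchyFun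

section Multiplier

variable {R : Type*} [Ring R] {a : R} (b : R) {k : ℕ}

theorem natDegree_C_mul_X_pow_sub_C (ha : a ≠ 0) (hk : 0 < k) :
    (C a * X ^ k - C b).natDegree = k := by
  rw [natDegree_sub_eq_left_of_natDegree_lt] <;> rw [natDegree_C_mul_X_pow k a ha]
  rwa [natDegree_C]

theorem leadingCoeff_C_mul_X_pow_sub_C (ha : a ≠ 0) (hk : 0 < k) :
    (C a * X ^ k - C b).leadingCoeff = a := by
  rw [leadingCoeff, natDegree_C_mul_X_pow_sub_C b ha hk, coeff_sub, coeff_C_mul_X_pow,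
    if_pos rfl, coeff_C, if_neg hk.ne', sub_zero]

theorem C_mul_X_pow_sub_C_ne_zero (ha : a ≠ 0) (hk : 0 < k) : C a * X ^ k - C b ≠ 0 :=
  ne_zero_of_natDegree_gt (n := 0) ((natDegree_C_mul_X_pow_sub_C b ha hk).symm ▸ hk)

end Multiplier

section Gap

variable {R : Type*} {n k : ℕ}

/-- At `j = n` the two contributions `aₙ aₙ₋ₖ` cancel; above `n` both vanish by the gap. -/
theorem coeff_C_mul_X_pow_sub_C_mul_eq_zero [CommRing R] {p : R[X]} (hn : p.natDegree = n)
    (hkn : k ≤ n) (hgap : ∀ j, 0 < j → j < k → p.coeff (n - j) = 0) {j : ℕ} (hnj : n ≤ j) (hjk : j < n + k) :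
    ((C (p.coeff n) * X ^ k - C (p.coeff (n - k))) * p).coeff j = 0 := by
  rw [sub_mul, mul_assoc, coeff_sub, coeff_C_mul, coeff_C_mul, coeff_X_pow_mul',
    if_pos (hkn.trans hnj)]
  rcases hnj.eq_or_lt with rfl | hlt
  · ring
  · have hshift : p.coeff (j - k) = 0 := by
      have := hgap (n + k - j) (by omega) (by omega)
      rwa [show n - (n + k - j) = j - k by omega] at this
    rw [hshift, coeff_eq_zero_of_natDegree_lt (by omega : p.natDegree < j), mul_zero, mul_zero,
      sub_zero]

theorem coeffNormSum_C_mul_X_pow_sub_C_mul_le [NormedCommRing R] {p : R[X]}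
    (hn : p.natDegree = n) (hk : 0 < k) (hkn : k ≤ n)
    (hgap : ∀ j, 0 < j → j < k → p.coeff (n - j) = 0) {y : ℝ} (hy : 0 ≤ y)
    (hpy : coeffNormSum n p y ≤ ‖p.coeff n‖ * y ^ n) :
    coeffNormSum (n + k) ((C (p.coeff n) * X ^ k - C (p.coeff (n - k))) * p) y
      ≤ ‖p.coeff n‖ * ‖p.coeff n‖ * y ^ (n + k) := by
  set a := p.coeff n
  set b := p.coeff (n - k)
  have hsplit : coeffNormSum n p y = coeffNormSum (n - k) p y + ‖b‖ * y ^ (n - k) := by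
    rw [← coeffNormSum_succ]
    refine coeffNormSum_eq_of_coeff_eq_zero (by omega) (fun j hj hjn => ?_) y
    simpa [show n - (n - j) = j by omega] using hgap (n - j) (by omega) (by omega)
  have hyn : y ^ k * y ^ (n - k) = y ^ n := by rw [← pow_add, Nat.add_sub_cancel' hkn]
  calc coeffNormSum (n + k) ((C a * X ^ k - C b) * p) y
      = coeffNormSum n (C a * (X ^ k * p) - C b * p) y := by
        rw [coeffNormSum_eq_of_coeff_eq_zero (by omega)
          (fun j => coeff_C_mul_X_pow_sub_C_mul_eq_zero hn hkn hgap), sub_mul, mul_assoc]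
    _ ≤ coeffNormSum n (C a * (X ^ k * p)) y + coeffNormSum n (C b * p) y :=
        coeffNormSum_sub_le _ _ _ hy
    _ ≤ ‖a‖ * coeffNormSum n (X ^ k * p) y + ‖b‖ * coeffNormSum n p y :=
        add_le_add (coeffNormSum_C_mul_le _ _ _ hy) (coeffNormSum_C_mul_le _ _ _ hy)
    _ = (‖a‖ * y ^ k + ‖b‖) * coeffNormSum n p y - ‖a‖ * ‖b‖ * y ^ n := by
        rw [coeffNormSum_X_pow_mul hkn, hsplit, ← hyn]
        ring
    _ ≤ (‖a‖ * y ^ k + ‖b‖) * (‖a‖ * y ^ n) - ‖a‖ * ‖b‖ * y ^ n := by gcongr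
    _ = ‖a‖ * ‖a‖ * y ^ (n + k) := by ring

end Gap

theorem cauchyFun_C_mul_X_pow_sub_C_mul_nonneg {p : ℂ[X]} {n k : ℕ} (hn : p.natDegree = n)
    (hk : 0 < k) (hkn : k ≤ n) (hgap : ∀ j, 0 < j → j < k → p.coeff (n - j) = 0) {y : ℝ}
    (hy : 0 ≤ y) (hpy : 0 ≤ cauchyFun p y) :
    0 ≤ cauchyFun ((C (p.coeff n) * X ^ k - C (p.coeff (n - k))) * p) y := by
  have hp : p ≠ 0 := ne_zero_of_natDegree_gt (n := 0) (by omega)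
  have hplc : p.leadingCoeff = p.coeff n := by rw [leadingCoeff, hn]
  have ha : p.coeff n ≠ 0 := hplc ▸ leadingCoeff_ne_zero.mpr hp
  have hf := C_mul_X_pow_sub_C_ne_zero (p.coeff (n - k)) ha hk
  rw [cauchyFun_eq_sub_coeffNormSum, hn, hplc] at hpy
  rw [cauchyFun_eq_sub_coeffNormSum, natDegree_mul hf hp, natDegree_C_mul_X_pow_sub_C _ ha hk, hn,
    add_comm k, leadingCoeff_mul, leadingCoeff_C_mul_X_pow_sub_C _ ha hk, hplc, norm_mul,
    sub_nonneg]
  exact coeffNormSum_C_mul_X_pow_sub_C_mul_le hn hk hkn hgap hy (sub_nonneg.mp hpy)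

theorem rahman_schmeisser_improved_cauchy_radius_general
    (p : Polynomial ℂ) (n : ℕ) (hp : p ≠ 0) (hn : p.natDegree = n)
    (k : ℕ) (hk : 0 < k) (hkn : k ≤ n)
    (hkmin : ∀ j, 0 < j → j < k → p.coeff (n - j) = 0)
    (x y : ℝ) (hx : 0 < x) (hy : 0 < y)
    (hxroot : cauchyFun ((C (p.coeff n) * X ^ k - C (p.coeff (n - k))) * p) x = 0)
    (hyroot : cauchyFun p y = 0) :
    x ≤ y := by
  have ha : p.coeff n ≠ 0 := by rw [← hn]; exact leadingCoeff_ne_zero.mpr hp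
  have hq : (C (p.coeff n) * X ^ k - C (p.coeff (n - k))) * p ≠ 0 :=
    mul_ne_zero (C_mul_X_pow_sub_C_ne_zero _ ha hk) hp
  exact le_of_cauchyFun_eq_zero_of_nonneg hq hx hy hxroot
    (cauchyFun_C_mul_X_pow_sub_C_mul_nonneg hn hk hkn hkmin hy.le hyroot.ge)

/-- Rahman–Schmeisser: `ρ[(aₙ z^k - a_{n-k}) p(z)] ≤ ρ[p]`, where `k` is the smallest
positive integer with `a_{n-k} ≠ 0`. -/
theorem rahman_schmeisser_improved_cauchy_radius
    (p : Polynomial ℂ) (n : ℕ) (hp : p ≠ 0) (hn : p.natDegree = n)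
    (k : ℕ) (hk : 0 < k) (hkn : k ≤ n)
    (hknz : p.coeff (n - k) ≠ 0)
    (hkmin : ∀ j, 0 < j → j < k → p.coeff (n - j) = 0)
    (x y : ℝ) (hx : 0 < x) (hy : 0 < y)
    (hxroot : cauchyFun ((C (p.coeff n) * X ^ k - C (p.coeff (n - k))) * p) x = 0)
    (hyroot : cauchyFun p y = 0) :
    x ≤ y :=
  rahman_schmeisser_improved_cauchy_radius_general p n hp hn k hk hkn hkmin x y hx hy hxroot hyroot
end

section
/- Let p(z) = Σ_{j=0}^n a_j z^j be a complex polynomial of degree n that is at least a trinomial (at least three nonzero coefficients), and let k and ℓ be the smallest positive integers such that a_{n-k} ≠ 0 and a_{n-k-ℓ} ≠ 0. Define q_1(z) = (a_n z^{k+ℓ} − a_{n-k} z^ℓ − a_{n-k-ℓ}) p(z). Then ρ[q_1] ≤ ρ[p]. -/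
open Polynomial

/-!
Write `p = X^s (a X^(k+ℓ) + b X^ℓ + c) + r` with `deg r < s` (this is what the gaps in the
coefficients of `p` say) and `m = a X^(k+ℓ) - (b X^ℓ + c)`. A difference of squares gives
`m p = a² X^(s+2(k+ℓ)) - X^s (b X^ℓ + c)² + m r`.

`normEval q y = ∑ ‖q_j‖ y^j` is subadditive and submultiplicative in `q` for `y ≥ 0`. At the
Cauchy radius `y` of `p` we have `normEval r y = y^s (u - v)` with `u = ‖a‖ y^(k+ℓ)` and
`v = ‖b‖ y^ℓ + ‖c‖`, so the part `L` of `m p` below its leading term satisfies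
`normEval L y ≤ y^s v² + (u + v) y^s (u - v) = y^s u²`: the Cauchy function of `m p` is
nonnegative at `y`. Since `cauchyFun q x / x^(deg q)` is strictly increasing in `x > 0` unless
`q` is a monomial, the positive root of the Cauchy function of `m p` is at most `y`.
-/

namespace Polynomial

theorem degree_C_mul_X_pow_add_lt {R : Type*} [Semiring R] {L : R[X]} {i N : ℕ} (a : R)
    (hi : i < N) (hL : L.degree < N) : (C a * X ^ i + L).degree < (N : WithBot ℕ) :=
  (degree_add_le _ _).trans_lt
    (max_lt ((degree_C_mul_X_pow_le i a).trans_lt (by exact_mod_cast hi)) hL)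

theorem coeff_C_mul_X_pow_add_of_lt {R : Type*} [Semiring R] {L : R[X]} {j N : ℕ} (a : R)
    (hj : j < N) : (C a * X ^ N + L).coeff j = L.coeff j := by
  simp [hj.ne]

theorem natTrailingDegree_mul_lt_natDegree {R : Type*} [Semiring R] [NoZeroDivisors R]
    {f g : R[X]} (hf₀ : f.coeff 0 ≠ 0) (hf : 0 < f.natDegree) (hg : g ≠ 0) :
    (f * g).natTrailingDegree < (f * g).natDegree := by
  have hf' : f ≠ 0 := by rintro rfl; simp at hf
  rw [natTrailingDegree_mul hf' hg, natDegree_mul hf' hg,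
    natTrailingDegree_eq_zero.mpr (.inr hf₀)]
  have := natTrailingDegree_le_natDegree g
  omega

theorem exists_eq_trinomial_add {R : Type*} [Ring R] {p : R[X]} {s k ℓ : ℕ}
    (hn : p.natDegree = s + k + ℓ) (hk : 0 < k) (hℓ : 0 < ℓ)
    (hkmin : ∀ j, 0 < j → j < k → p.coeff (s + k + ℓ - j) = 0)
    (hlmin : ∀ j, 0 < j → j < ℓ → p.coeff (s + ℓ - j) = 0) :
    ∃ r : R[X], r.degree < s ∧ p = C (p.coeff (s + k + ℓ)) * X ^ (s + k + ℓ)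
      + C (p.coeff (s + ℓ)) * X ^ (s + ℓ) + C (p.coeff s) * X ^ s + r := by
  refine ⟨p - C (p.coeff (s + k + ℓ)) * X ^ (s + k + ℓ) - C (p.coeff (s + ℓ)) * X ^ (s + ℓ)
    - C (p.coeff s) * X ^ s, ?_, by abel⟩
  have hgap : ∀ j, s < j → j ≠ s + ℓ → j ≠ s + k + ℓ → p.coeff j = 0 := by
    intro j hsj hj₁ hj₂
    rcases lt_or_ge (s + k + ℓ) j with hj | hj
    · exact coeff_eq_zero_of_natDegree_lt (hn ▸ hj)
    rcases lt_or_ge (s + ℓ) j with hj' | hj'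
    · simpa [show s + k + ℓ - (s + k + ℓ - j) = j by omega] using
        hkmin (s + k + ℓ - j) (by omega) (by omega)
    · simpa [show s + ℓ - (s + ℓ - j) = j by omega] using
        hlmin (s + ℓ - j) (by omega) (by omega)
  rw [degree_lt_iff_coeff_zero]
  intro j hj
  simp only [coeff_sub, coeff_C_mul_X_pow]
  split_ifs <;> first
    | (exfalso; omega)
    | (simp only [sub_zero]; exact hgap j (by omega) (by omega) (by omega))
    | (subst_vars; simp)

theorem degree_trinomial_mul_sub_lt {R : Type*} [Ring R] {a b c : R} {r : R[X]} {s k ℓ : ℕ}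
    (hk : 0 < k) (hr : r.degree < s) :
    ((C a * X ^ (k + ℓ) - C b * X ^ ℓ - C c) * r
      - X ^ s * (C b * X ^ ℓ + C c) ^ 2).degree < ↑(s + k + ℓ + (k + ℓ)) := by
  refine (degree_sub_le _ _).trans_lt (max_lt ?_ ?_)
  · refine (degree_mul_le_of_le (a := ↑(k + ℓ)) (b := s) ?_ hr.le).trans_lt ?_
    · compute_degree
      exact max_le (by norm_cast) (Nat.cast_le.mpr (by omega))
    · norm_cast; omega
  · refine lt_of_le_of_lt (b := ↑(s + 2 * ℓ)) ?_ ?_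
    · compute_degree
      norm_cast
    · norm_cast; omega

section SeminormedRing

variable {R : Type*} [SeminormedRing R]

noncomputable def normEval (q : R[X]) (y : ℝ) : ℝ :=
  q.sum fun j a => ‖a‖ * y ^ j

theorem normEval_eq_sum_range {q : R[X]} {M : ℕ} (h : q.degree < M) (y : ℝ) :
    normEval q y = ∑ j ∈ Finset.range M, ‖q.coeff j‖ * y ^ j := by
  rcases eq_or_ne q 0 with rfl | hq
  · simp [normEval]
  · exact sum_over_range' _ (fun _ => by simp) M ((natDegree_lt_iff_degree_lt hq).mpr h)

theorem normEval_nonneg (q : R[X]) {y : ℝ} (hy : 0 ≤ y) : 0 ≤ normEval q y :=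
  Finset.sum_nonneg fun _ _ => by positivity

@[simp]
theorem normEval_zero (y : ℝ) : normEval (0 : R[X]) y = 0 := by
  simp [normEval]

@[simp]
theorem normEval_monomial (n : ℕ) (a : R) (y : ℝ) :
    normEval (monomial n a) y = ‖a‖ * y ^ n :=
  sum_monomial_index a _ (by simp)

@[simp]
theorem normEval_C_mul_X_pow (n : ℕ) (a : R) (y : ℝ) :
    normEval (C a * X ^ n) y = ‖a‖ * y ^ n := by
  rw [C_mul_X_pow_eq_monomial, normEval_monomial]

@[simp]
theorem normEval_C (a : R) (y : ℝ) : normEval (C a) y = ‖a‖ := by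
  simpa using normEval_C_mul_X_pow 0 a y

@[simp]
theorem normEval_X_pow [NormOneClass R] (n : ℕ) (y : ℝ) :
    normEval (X ^ n : R[X]) y = y ^ n := by
  simpa using normEval_C_mul_X_pow n (1 : R) y

@[simp]
theorem normEval_neg (q : R[X]) (y : ℝ) : normEval (-q) y = normEval q y := by
  simp [normEval, Polynomial.sum_def]

theorem normEval_add_le (f g : R[X]) {y : ℝ} (hy : 0 ≤ y) :
    normEval (f + g) y ≤ normEval f y + normEval g y := by
  set M := max f.natDegree g.natDegree + 1
  have hf : f.degree < M :=
    degree_le_natDegree.trans_lt (by exact_mod_cast (by omega : f.natDegree < M))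
  have hg : g.degree < M :=
    degree_le_natDegree.trans_lt (by exact_mod_cast (by omega : g.natDegree < M))
  rw [normEval_eq_sum_range hf, normEval_eq_sum_range hg,
    normEval_eq_sum_range ((degree_add_le f g).trans_lt (max_lt hf hg)),
    ← Finset.sum_add_distrib]
  refine Finset.sum_le_sum fun j _ => ?_
  rw [coeff_add, ← add_mul]
  exact mul_le_mul_of_nonneg_right (norm_add_le _ _) (by positivity)

theorem normEval_sub_le (f g : R[X]) {y : ℝ} (hy : 0 ≤ y) :
    normEval (f - g) y ≤ normEval f y + normEval g y := by
  simpa [sub_eq_add_neg] using normEval_add_le f (-g) hy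

theorem normEval_sum_le {ι : Type*} (s : Finset ι) (f : ι → R[X]) {y : ℝ} (hy : 0 ≤ y) :
    normEval (∑ i ∈ s, f i) y ≤ ∑ i ∈ s, normEval (f i) y :=
  Finset.le_sum_of_subadditive (normEval · y) (normEval_zero y).le (normEval_add_le · · hy) s f

theorem normEval_mul_le (f g : R[X]) {y : ℝ} (hy : 0 ≤ y) :
    normEval (f * g) y ≤ normEval f y * normEval g y := by
  rw [mul_eq_sum_sum]
  refine (normEval_sum_le _ _ hy).trans ?_
  rw [normEval, Polynomial.sum_def, Finset.sum_mul]
  refine Finset.sum_le_sum fun i _ => (normEval_sum_le _ _ hy).trans ?_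
  rw [normEval, Polynomial.sum_def, Finset.mul_sum]
  refine Finset.sum_le_sum fun j _ => ?_
  rw [normEval_monomial, pow_add, mul_mul_mul_comm]
  exact mul_le_mul_of_nonneg_right (norm_mul_le _ _) (by positivity)

theorem normEval_C_mul_X_pow_add {L : R[X]} {N : ℕ} (a : R) (hL : L.degree < N) (y : ℝ) :
    normEval (C a * X ^ N + L) y = ‖a‖ * y ^ N + normEval L y := by
  rw [normEval_eq_sum_range (degree_C_mul_X_pow_add_lt a N.lt_succ_self
      (hL.trans (by exact_mod_cast N.lt_succ_self))), Finset.sum_range_succ,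
    normEval_eq_sum_range hL, coeff_add, coeff_C_mul_X_pow, if_pos rfl,
    coeff_eq_zero_of_degree_lt hL, add_zero, add_comm]
  congr 1
  exact Finset.sum_congr rfl fun j hj =>
    by rw [coeff_C_mul_X_pow_add_of_lt a (Finset.mem_range.mp hj)]

theorem normEval_trinomial_mul_sub_le [NormOneClass R] {a b c : R} {r : R[X]} {s k ℓ : ℕ}
    {y : ℝ} (hy : 0 ≤ y)
    (hr : normEval r y = y ^ s * (‖a‖ * y ^ (k + ℓ) - (‖b‖ * y ^ ℓ + ‖c‖))) :
    normEval ((C a * X ^ (k + ℓ) - C b * X ^ ℓ - C c) * r - X ^ s * (C b * X ^ ℓ + C c) ^ 2) y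
      ≤ y ^ s * (‖a‖ * y ^ (k + ℓ)) ^ 2 := by
  set u := ‖a‖ * y ^ (k + ℓ)
  set v := ‖b‖ * y ^ ℓ + ‖c‖
  have hm : normEval (C a * X ^ (k + ℓ) - C b * X ^ ℓ - C c) y ≤ u + v := by
    refine (normEval_sub_le _ _ hy).trans ?_
    have := normEval_sub_le (C a * X ^ (k + ℓ)) (C b * X ^ ℓ) hy
    simp only [normEval_C_mul_X_pow, normEval_C] at this ⊢
    linarith
  have hg : normEval (C b * X ^ ℓ + C c) y ≤ v := by
    have := normEval_add_le (C b * X ^ ℓ) (C c) hy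
    rwa [normEval_C_mul_X_pow, normEval_C] at this
  have hg_sq : normEval ((C b * X ^ ℓ + C c) ^ 2) y ≤ v ^ 2 := by
    rw [sq, sq]
    exact (normEval_mul_le _ _ hy).trans
      (mul_le_mul hg hg (normEval_nonneg _ hy) ((normEval_nonneg _ hy).trans hg))
  calc _ ≤ normEval ((C a * X ^ (k + ℓ) - C b * X ^ ℓ - C c) * r) y
          + normEval (X ^ s * (C b * X ^ ℓ + C c) ^ 2) y := normEval_sub_le _ _ hy
    _ ≤ (u + v) * normEval r y + y ^ s * v ^ 2 := by
        gcongr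
        · exact (normEval_mul_le _ _ hy).trans
            (mul_le_mul_of_nonneg_right hm (normEval_nonneg r hy))
        · exact (normEval_mul_le _ _ hy).trans
            (by rw [normEval_X_pow]; exact mul_le_mul_of_nonneg_left hg_sq (by positivity))
    _ = y ^ s * u ^ 2 := by rw [hr]; ring

end SeminormedRing

end Polynomial

theorem cauchyFun_C_mul_X_pow_add {a : ℂ} {L : ℂ[X]} {N : ℕ} (ha : a ≠ 0) (hL : L.degree < N)
    (y : ℝ) : cauchyFun (C a * X ^ N + L) y = ‖a‖ * y ^ N - normEval L y := by
  have hlt : L.degree < (C a * X ^ N).degree := by rwa [degree_C_mul_X_pow N ha]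
  rw [cauchyFun, leadingCoeff_add_of_degree_lt' hlt, natDegree_add_eq_left_of_degree_lt hlt,
    leadingCoeff_C_mul_X_pow, natDegree_C_mul_X_pow N a ha, normEval_eq_sum_range hL]
  congr 1
  exact Finset.sum_congr rfl fun j hj =>
    by rw [coeff_C_mul_X_pow_add_of_lt a (Finset.mem_range.mp hj)]

theorem pow_mul_pow_lt_pow_mul_pow {x y : ℝ} (hy : 0 < y) (hyx : y < x) {j d : ℕ}
    (hjd : j < d) : x ^ j * y ^ d < y ^ j * x ^ d := by
  obtain ⟨e, rfl⟩ := Nat.exists_eq_add_of_le hjd.le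
  have hxy : 0 < x ^ j * y ^ j := by have := hy.trans hyx; positivity
  calc x ^ j * y ^ (j + e) = x ^ j * y ^ j * y ^ e := by ring
    _ < x ^ j * y ^ j * x ^ e :=
        mul_lt_mul_of_pos_left (pow_lt_pow_left₀ hyx hy.le (by omega)) hxy
    _ = y ^ j * x ^ (j + e) := by ring

theorem cauchyFun_mul_pow_lt {q : ℂ[X]} (hq : q.natTrailingDegree < q.natDegree) {x y : ℝ}
    (hy : 0 < y) (hyx : y < x) :
    cauchyFun q y * x ^ q.natDegree < cauchyFun q x * y ^ q.natDegree := by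
  have hq₀ : q ≠ 0 := by rintro rfl; simp at hq
  have key : (∑ j ∈ Finset.range q.natDegree, ‖q.coeff j‖ * x ^ j) * y ^ q.natDegree
      < (∑ j ∈ Finset.range q.natDegree, ‖q.coeff j‖ * y ^ j) * x ^ q.natDegree := by
    simp only [Finset.sum_mul, mul_assoc]
    refine Finset.sum_lt_sum (fun j hj => ?_) ⟨_, Finset.mem_range.mpr hq, ?_⟩
    · exact mul_le_mul_of_nonneg_left
        (pow_mul_pow_lt_pow_mul_pow hy hyx (Finset.mem_range.mp hj)).le (norm_nonneg _)
    · exact mul_lt_mul_of_pos_left (pow_mul_pow_lt_pow_mul_pow hy hyx hq)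
        (norm_pos_iff.mpr (coeff_natTrailingDegree_ne_zero.mpr hq₀))
  rw [cauchyFun, cauchyFun]
  linarith

theorem le_of_cauchyFun_eq_zero {q : ℂ[X]} (hq : q.natTrailingDegree < q.natDegree) {x y : ℝ}
    (hy : 0 < y) (hx : cauchyFun q x = 0) (hqy : 0 ≤ cauchyFun q y) : x ≤ y := by
  by_contra! hyx
  have := cauchyFun_mul_pow_lt hq hy hyx
  rw [hx, zero_mul] at this
  exact (mul_nonneg hqy (pow_pos (hy.trans hyx) _).le).not_gt this

theorem cauchyFun_trinomial_mul_nonneg {a b c : ℂ} {r : ℂ[X]} {s k ℓ : ℕ} (ha : a ≠ 0)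
    (hk : 0 < k) (hℓ : 0 < ℓ) (hr : r.degree < s) {y : ℝ} (hy : 0 ≤ y)
    (hroot : cauchyFun (C a * X ^ (s + k + ℓ) + C b * X ^ (s + ℓ) + C c * X ^ s + r) y = 0) :
    0 ≤ cauchyFun ((C a * X ^ (k + ℓ) - C b * X ^ ℓ - C c)
      * (C a * X ^ (s + k + ℓ) + C b * X ^ (s + ℓ) + C c * X ^ s + r)) y := by
  have hr' : normEval r y = y ^ s * (‖a‖ * y ^ (k + ℓ) - (‖b‖ * y ^ ℓ + ‖c‖)) := by
    have hc : (C c * X ^ s + r).degree < ↑(s + ℓ) :=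
      degree_C_mul_X_pow_add_lt c (by omega) (hr.trans (by exact_mod_cast (by omega : s < s + ℓ)))
    have hb : (C b * X ^ (s + ℓ) + (C c * X ^ s + r)).degree < ↑(s + k + ℓ) :=
      degree_C_mul_X_pow_add_lt b (by omega)
        (hc.trans (by exact_mod_cast (by omega : s + ℓ < s + k + ℓ)))
    rw [add_assoc, add_assoc, cauchyFun_C_mul_X_pow_add ha hb, normEval_C_mul_X_pow_add b hc,
      normEval_C_mul_X_pow_add c hr] at hroot
    linear_combination -hroot
  have hq : (C a * X ^ (k + ℓ) - C b * X ^ ℓ - C c)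
      * (C a * X ^ (s + k + ℓ) + C b * X ^ (s + ℓ) + C c * X ^ s + r)
      = C (a * a) * X ^ (s + k + ℓ + (k + ℓ)) + ((C a * X ^ (k + ℓ) - C b * X ^ ℓ - C c) * r
        - X ^ s * (C b * X ^ ℓ + C c) ^ 2) := by
    rw [C_mul]; ring
  rw [hq, cauchyFun_C_mul_X_pow_add (mul_ne_zero ha ha) (degree_trinomial_mul_sub_lt hk hr),
    norm_mul]
  have := normEval_trinomial_mul_sub_le hy hr'
  have e : y ^ s * (‖a‖ * y ^ (k + ℓ)) ^ 2 = ‖a‖ * ‖a‖ * y ^ (s + k + ℓ + (k + ℓ)) := by ring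
  linarith

theorem improved_cauchy_radius_q1_general
    (p : Polynomial ℂ) (n : ℕ) (hp : p ≠ 0) (hn : p.natDegree = n)
    (k ℓ : ℕ) (hk : 0 < k) (hℓ : 0 < ℓ) (hkl : k + ℓ ≤ n)
    (hkmin : ∀ j, 0 < j → j < k → p.coeff (n - j) = 0)
    (hlnz : p.coeff (n - k - ℓ) ≠ 0)
    (hlmin : ∀ j, 0 < j → j < ℓ → p.coeff (n - k - j) = 0)
    (x y : ℝ) (hy : 0 < y)
    (hxroot : cauchyFun
      ((C (p.coeff n) * X ^ (k + ℓ) - C (p.coeff (n - k)) * X ^ ℓ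
          - C (p.coeff (n - k - ℓ))) * p) x = 0)
    (hyroot : cauchyFun p y = 0) :
    x ≤ y := by
  have ha : p.coeff n ≠ 0 := hn ▸ mt leadingCoeff_eq_zero.mp hp
  obtain ⟨s, rfl⟩ : ∃ s, n = s + k + ℓ := ⟨n - k - ℓ, by omega⟩
  rw [show s + k + ℓ - k = s + ℓ by omega] at hxroot hlnz hlmin
  rw [show s + ℓ - ℓ = s by omega] at hxroot hlnz
  obtain ⟨r, hr, hpr⟩ := exists_eq_trinomial_add hn hk hℓ hkmin hlmin
  set a := p.coeff (s + k + ℓ)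
  set b := p.coeff (s + ℓ)
  set c := p.coeff s
  have hm₀ : (C a * X ^ (k + ℓ) - C b * X ^ ℓ - C c).coeff 0 ≠ 0 := by
    rw [coeff_sub, coeff_sub, coeff_C_mul_X_pow, coeff_C_mul_X_pow, coeff_C_zero,
      if_neg (by omega), if_neg (by omega)]
    simpa using hlnz
  have hm : 0 < (C a * X ^ (k + ℓ) - C b * X ^ ℓ - C c).natDegree :=
    (by omega : 0 < k + ℓ).trans_le
      (le_natDegree_of_ne_zero (by simpa [coeff_C, hk.ne'] using ha))
  refine le_of_cauchyFun_eq_zero (natTrailingDegree_mul_lt_natDegree hm₀ hm hp) hy hxroot ?_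
  rw [hpr] at hyroot ⊢
  exact cauchyFun_trinomial_mul_nonneg ha hk hℓ hr hy.le hyroot

/-- For the multiplier `aₙ z^{k+ℓ} - a_{n-k} z^ℓ - a_{n-k-ℓ}`,
the Cauchy radius of `q₁ = (aₙ z^{k+ℓ} - a_{n-k} z^ℓ - a_{n-k-ℓ}) p` is at most that of `p`. -/
theorem improved_cauchy_radius_q1
    (p : Polynomial ℂ) (n : ℕ) (hp : p ≠ 0) (hn : p.natDegree = n)
    (k ℓ : ℕ) (hk : 0 < k) (hℓ : 0 < ℓ) (hkl : k + ℓ ≤ n)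
    (hknz : p.coeff (n - k) ≠ 0)
    (hkmin : ∀ j, 0 < j → j < k → p.coeff (n - j) = 0)
    (hlnz : p.coeff (n - k - ℓ) ≠ 0)
    (hlmin : ∀ j, 0 < j → j < ℓ → p.coeff (n - k - j) = 0)
    (x y : ℝ) (hx : 0 < x) (hy : 0 < y)
    (hxroot : cauchyFun
      ((C (p.coeff n) * X ^ (k + ℓ) - C (p.coeff (n - k)) * X ^ ℓ
          - C (p.coeff (n - k - ℓ))) * p) x = 0)
    (hyroot : cauchyFun p y = 0) :
    x ≤ y :=
  improved_cauchy_radius_q1_general p n hp hn k ℓ hk hℓ hkl hkmin hlnz hlmin x y hy hxroot hyroot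
end

section
/- Let p(z) = Σ_{j=0}^n a_j z^j with all coefficients a_j nonzero, n ≥ 3, and suppose that for j = 2,…,n−1 the triangle equality |a_n a_{j-2} − a_{n-1} a_{j-1} − a_{n-2} a_j| = |a_n a_{j-2}| + |a_{n-1} a_{j-1}| + |a_{n-2} a_j| holds, and also |a_{n-1} a_0 + a_{n-2} a_1| = |a_{n-1} a_0| + |a_{n-2} a_1|. Then, with φ_j = arg a_j and Δ = φ_{n-1} − φ_n + π, the arguments satisfy φ_j ≡ (n−j)Δ + φ_n − π (mod 2π) for j = 0,…,n−1. -/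
/-!
Write `θⱼ` for `arg aⱼ` as an angle, i.e. modulo `2π`. Equality in the triangle inequality for a
sum (difference) of nonzero complex numbers forces equal (opposite) arguments. Since the first
triangle equality already gives `‖a_n a_{j-2} - a_{n-1} a_{j-1}‖ = ‖a_n a_{j-2}‖ + ‖a_{n-1} a_{j-1}‖`,
it yields `θ_{j-2} = θ_{j-1} + Δ` for `j = 2,…,n-1`. The last step `θ_{n-2} = θ_{n-1} + Δ` comes from
the second equality, `θ_{n-1} + θ₀ = θ_{n-2} + θ₁`, combined with `θ₀ = θ₁ + Δ`. The arguments thus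
form an arithmetic progression with difference `Δ`, read downwards from `θ_{n-1}`.
-/

open Complex

theorem norm_sub_eq_of_norm_sub_sub_eq {E : Type*} [SeminormedAddCommGroup E] {x y z : E}
    (h : ‖x - y - z‖ = ‖x‖ + ‖y‖ + ‖z‖) : ‖x - y‖ = ‖x‖ + ‖y‖ :=
  le_antisymm (norm_sub_le x y) (by linarith [norm_sub_le (x - y) z, norm_sub_le x y])

namespace Complex

theorem arg_coe_angle_eq_of_norm_add_eq {x y : ℂ} (hx : x ≠ 0) (hy : y ≠ 0)
    (h : ‖x + y‖ = ‖x‖ + ‖y‖) : (x.arg : Real.Angle) = y.arg := by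
  rcases norm_add_eq_iff.mp h with h | h | h
  · exact absurd h hx
  · exact absurd h hy
  · rw [h]

theorem arg_coe_angle_eq_add_pi_of_norm_sub_eq {x y : ℂ} (hx : x ≠ 0) (hy : y ≠ 0)
    (h : ‖x - y‖ = ‖x‖ + ‖y‖) : (x.arg : Real.Angle) = y.arg + Real.pi := by
  rw [← arg_neg_coe_angle hy]
  exact arg_coe_angle_eq_of_norm_add_eq hx (neg_ne_zero.mpr hy)
    (by rwa [norm_neg, ← sub_eq_add_neg])

theorem arg_coe_angle_eq_of_norm_mul_sub_mul_eq {p q r s : ℂ} (hp : p ≠ 0) (hq : q ≠ 0)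
    (hr : r ≠ 0) (hs : s ≠ 0) (h : ‖p * q - r * s‖ = ‖p * q‖ + ‖r * s‖) :
    (q.arg : Real.Angle) = s.arg + (r.arg - p.arg + Real.pi) := by
  have hθ := arg_coe_angle_eq_add_pi_of_norm_sub_eq (mul_ne_zero hp hq) (mul_ne_zero hr hs) h
  rw [arg_mul_coe_angle hp hq, arg_mul_coe_angle hr hs] at hθ
  rw [eq_sub_of_add_eq' hθ]
  abel

theorem arg_coe_angle_add_eq_of_norm_mul_add_mul_eq {p q r s : ℂ} (hp : p ≠ 0) (hq : q ≠ 0)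
    (hr : r ≠ 0) (hs : s ≠ 0) (h : ‖p * q + r * s‖ = ‖p * q‖ + ‖r * s‖) :
    (p.arg + q.arg : Real.Angle) = r.arg + s.arg := by
  rw [← arg_mul_coe_angle hp hq, ← arg_mul_coe_angle hr hs]
  exact arg_coe_angle_eq_of_norm_add_eq (mul_ne_zero hp hq) (mul_ne_zero hr hs) h

end Complex

theorem Real.Angle.exists_int_eq_add_two_pi_mul_of_coe_eq {x y : ℝ}
    (h : (x : Real.Angle) = y) : ∃ m : ℤ, x = y + 2 * Real.pi * m := by
  obtain ⟨m, hm⟩ := Real.Angle.angle_eq_iff_two_pi_dvd_sub.mp h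
  exact ⟨m, by linarith⟩

theorem eq_nsmul_add_of_forall_eq_succ_add {G : Type*} [AddCommMonoid G] {θ : ℕ → G} {D : G}
    {N : ℕ} (h : ∀ k < N, θ k = θ (k + 1) + D) : ∀ j ≤ N, θ j = (N - j) • D + θ N := by
  have key : ∀ i ≤ N, θ (N - i) = i • D + θ N := by
    intro i
    induction i with
    | zero => simp
    | succ i ih =>
      intro hi
      rw [h (N - (i + 1)) (by omega), show N - (i + 1) + 1 = N - i by omega, ih (by omega),
        succ_nsmul, add_right_comm]
  intro j hj
  simpa [Nat.sub_sub_self hj] using key (N - j) (Nat.sub_le N j)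

/-- If all the triangle equalities hold, then the arguments of the coefficients satisfy
`φⱼ ≡ (n-j)Δ + φₙ - π (mod 2π)` for `j = 0,…,n-1`, where `Δ = φ_{n-1} - φₙ + π`. -/
theorem triangle_equalities_force_argument_progression
    (n : ℕ) (a : ℕ → ℂ) (hn : 3 ≤ n) (ha : ∀ j ≤ n, a j ≠ 0)
    (h1 : ∀ j, 2 ≤ j → j ≤ n - 1 →
      ‖a n * a (j - 2) - a (n - 1) * a (j - 1) - a (n - 2) * a j‖
        = ‖a n * a (j - 2)‖ + ‖a (n - 1) * a (j - 1)‖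
          + ‖a (n - 2) * a j‖)
    (h2 : ‖a (n - 1) * a 0 + a (n - 2) * a 1‖
        = ‖a (n - 1) * a 0‖ + ‖a (n - 2) * a 1‖) :
    ∀ j ≤ n - 1, ∃ m : ℤ,
      (a j).arg = ((n - j : ℕ) : ℝ) * ((a (n - 1)).arg - (a n).arg + Real.pi)
        + (a n).arg - Real.pi + 2 * Real.pi * m := by
  set θ : ℕ → Real.Angle := fun j => ((a j).arg : Real.Angle)
  set D : Real.Angle := θ (n - 1) - θ n + Real.pi with hD
  have step : ∀ k ≤ n - 3, θ k = θ (k + 1) + D := by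
    intro k hk
    have h := norm_sub_eq_of_norm_sub_sub_eq (h1 (k + 2) (by omega) (by omega))
    rw [show k + 2 - 2 = k by omega, show k + 2 - 1 = k + 1 by omega] at h
    exact arg_coe_angle_eq_of_norm_mul_sub_mul_eq (ha n le_rfl) (ha k (by omega))
      (ha (n - 1) (by omega)) (ha (k + 1) (by omega)) h
  have last : θ (n - 2) = θ (n - 1) + D := by
    have hθ := arg_coe_angle_add_eq_of_norm_mul_add_mul_eq (ha (n - 1) (by omega))
      (ha 0 (by omega)) (ha (n - 2) (by omega)) (ha 1 (by omega)) h2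
    change θ (n - 1) + θ 0 = θ (n - 2) + θ 1 at hθ
    rw [step 0 (by omega)] at hθ
    rw [eq_sub_of_add_eq hθ.symm]
    abel
  have progression : ∀ j ≤ n - 1, θ j = (n - 1 - j) • D + θ (n - 1) := by
    refine eq_nsmul_add_of_forall_eq_succ_add fun k hk => ?_
    rcases Nat.lt_or_ge k (n - 2) with hk' | hk'
    · exact step k (by omega)
    · rw [show k = n - 2 by omega, show n - 2 + 1 = n - 1 by omega, last]
  intro j hj
  refine Real.Angle.exists_int_eq_add_two_pi_mul_of_coe_eq (?_ : θ j = _)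
  rw [progression j hj, ← nsmul_eq_mul, show n - j = n - 1 - j + 1 by omega]
  push_cast [Real.Angle.coe_add, Real.Angle.coe_sub, Real.Angle.coe_nsmul]
  rw [succ_nsmul, hD]
  abel
end

section
/- Let p(z) = Σ_{j=0}^n a_j z^j with all a_j nonzero, and suppose the arguments φ_j = arg a_j satisfy φ_j ≡ (n−j)Δ + φ_n − π (mod 2π) for j = 0,…,n−1, where Δ = φ_{n-1} − φ_n + π. Then with x = ρ[p] the Cauchy radius of p, the number x e^{iΔ} is a zero of p; in particular, p has a zero of modulus exactly ρ[p]. -/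
/-!
Write `aⱼ = ‖aⱼ‖ e^{iφⱼ}` and `z = x e^{iΔ}`. Then `aⱼ zʲ = ‖aⱼ‖ xʲ e^{i(φⱼ + jΔ)}`, and the
hypothesis on the arguments makes `φⱼ + jΔ ≡ nΔ + φₙ - π` for every `j < n`: all lower-order terms
point in the direction opposite to the leading one, `e^{i(nΔ + φₙ)}`. Their lengths sum to the
length `‖aₙ‖ xⁿ` of the leading term because `x` is the Cauchy radius, so everything cancels.
-/

open Complex
open scoped Real

lemma mul_ofReal_mul_exp_mul_I_pow (a : ℂ) (x Δ : ℝ) (j : ℕ) :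
    a * (x * exp (Δ * I)) ^ j = ((‖a‖ * x ^ j : ℝ) : ℂ) * exp ((a.arg + j * Δ : ℝ) * I) := by
  conv_lhs => rw [← norm_mul_exp_arg_mul_I a]
  rw [mul_pow, ← exp_nat_mul]
  push_cast
  rw [add_mul, exp_add, mul_assoc (j : ℂ)]
  ring

lemma exp_mul_I_eq_neg_of_eq_sub_pi_add_two_pi_mul {θ ψ : ℝ} {m : ℤ}
    (h : θ = ψ - π + 2 * π * m) : exp (θ * I) = -exp (ψ * I) := by
  rw [h, ← exp_sub_pi_mul_I]
  push_cast
  rw [show ((ψ : ℂ) - π + 2 * π * m) * I = ψ * I - π * I + m * (2 * π * I) by ring,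
    exp_add, exp_int_mul_two_pi_mul_I, mul_one]

lemma mul_ofReal_mul_exp_mul_I_pow_eq_neg {a : ℂ} {x Δ ψ : ℝ} {j n : ℕ} (hj : j ≤ n) {m : ℤ}
    (harg : a.arg = ((n - j : ℕ) : ℝ) * Δ + ψ - π + 2 * π * m) :
    a * (x * exp (Δ * I)) ^ j = -(((‖a‖ * x ^ j : ℝ) : ℂ) * exp ((n * Δ + ψ : ℝ) * I)) := by
  have hφ : a.arg + j * Δ = (n * Δ + ψ) - π + 2 * π * m := by
    rw [harg, Nat.cast_sub hj]
    ring
  rw [mul_ofReal_mul_exp_mul_I_pow, exp_mul_I_eq_neg_of_eq_sub_pi_add_two_pi_mul hφ, mul_neg]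

theorem argument_progression_gives_zero_of_modulus_cauchy_radius_general
    (n : ℕ) (a : ℕ → ℂ)
    (harg : ∀ j ≤ n - 1, ∃ m : ℤ,
      (a j).arg = ((n - j : ℕ) : ℝ) * ((a (n - 1)).arg - (a n).arg + Real.pi)
        + (a n).arg - Real.pi + 2 * Real.pi * m)
    (x : ℝ) (hx : 0 < x)
    (hroot : ‖a n‖ * x ^ n
      = ∑ j ∈ Finset.range n, ‖a j‖ * x ^ j) :
    (∑ j ∈ Finset.range (n + 1),
        a j * ((x : ℂ) * Complex.exp
          (((a (n - 1)).arg - (a n).arg + Real.pi : ℝ) * Complex.I)) ^ j = 0) ∧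
      ‖(x : ℂ) * Complex.exp
          (((a (n - 1)).arg - (a n).arg + Real.pi : ℝ) * Complex.I)‖ = x := by
  set Δ : ℝ := (a (n - 1)).arg - (a n).arg + π
  set u : ℂ := exp ((n * Δ + (a n).arg : ℝ) * I)
  have hlow : ∀ j ∈ Finset.range n,
      a j * (x * exp (Δ * I)) ^ j = -(((‖a j‖ * x ^ j : ℝ) : ℂ) * u) := by
    intro j hj
    rw [Finset.mem_range] at hj
    obtain ⟨m, hm⟩ := harg j (Nat.le_sub_one_of_lt hj)
    exact mul_ofReal_mul_exp_mul_I_pow_eq_neg hj.le hm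
  have htop : a n * (x * exp (Δ * I)) ^ n = ((‖a n‖ * x ^ n : ℝ) : ℂ) * u := by
    rw [mul_ofReal_mul_exp_mul_I_pow, add_comm]
  constructor
  · rw [Finset.sum_range_succ, Finset.sum_congr rfl hlow, htop, Finset.sum_neg_distrib,
      ← Finset.sum_mul, ← ofReal_sum, hroot, neg_add_cancel]
  · rw [norm_mul, norm_exp_ofReal_mul_I, norm_real, Real.norm_of_nonneg hx.le, mul_one]

/-- If the arguments of the coefficients satisfy `φⱼ ≡ (n-j)Δ + φₙ - π (mod 2π)` for
`j = 0,…,n-1` with `Δ = φ_{n-1} - φₙ + π`, then `x e^{iΔ}` is a zero of `p`, where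
`x = ρ[p]` is the Cauchy radius; in particular `p` has a zero of modulus exactly `ρ[p]`. -/
theorem argument_progression_gives_zero_of_modulus_cauchy_radius
    (n : ℕ) (a : ℕ → ℂ) (hn : 1 ≤ n) (ha : ∀ j ≤ n, a j ≠ 0)
    (harg : ∀ j ≤ n - 1, ∃ m : ℤ,
      (a j).arg = ((n - j : ℕ) : ℝ) * ((a (n - 1)).arg - (a n).arg + Real.pi)
        + (a n).arg - Real.pi + 2 * Real.pi * m)
    (x : ℝ) (hx : 0 < x)
    (hroot : ‖a n‖ * x ^ n
      = ∑ j ∈ Finset.range n, ‖a j‖ * x ^ j) :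
    (∑ j ∈ Finset.range (n + 1),
        a j * ((x : ℂ) * Complex.exp
          (((a (n - 1)).arg - (a n).arg + Real.pi : ℝ) * Complex.I)) ^ j = 0) ∧
      ‖(x : ℂ) * Complex.exp
          (((a (n - 1)).arg - (a n).arg + Real.pi : ℝ) * Complex.I)‖ = x :=
  argument_progression_gives_zero_of_modulus_cauchy_radius_general n a harg x hx hroot
end

section
/- Let p(z) = Σ_{j=0}^n a_j z^j be a complex polynomial of degree n ≥ 3 with all coefficients nonzero (so k = ℓ = 1). If p has no zero of modulus equal to ρ[p], then ρ[q_1] < ρ[p] strictly, where q_1(z) = (a_n z^2 − a_{n-1} z − a_{n-2}) p(z). -/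
open Polynomial

/-!
Write `a_j` for the coefficients of `p` and `b_j = ‖a_j‖`. Below degree `n`, the coefficient of
`z^k` in `q₁` is `a_n a_{k-2} - a_{n-1} a_{k-1} - a_{n-2} a_k`, bounded in modulus by the triangle
inequality. Because `y = ρ[p]` solves `b_n y^n = ∑_{j<n} b_j y^j`, these bounds weighted by `y^k`
add up exactly to `b_n² y^{n+2} - b_{n-1}² y^n`, the leading part of the Cauchy function of `q₁`
at `y` (the coefficient of `z^{n+1}` in `q₁` vanishes). So the Cauchy function of `q₁` is
nonnegative at `y`, and as `cauchyFun q x / x^(deg q)` increases in `x`, `ρ[q₁] ≤ ρ[p]`.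

If `ρ[q₁] = ρ[p]`, every one of these triangle inequalities is an equality. Those for `k ≥ 2` and
for `k = 1` force the phases `a_j / |a_j|` to be `u c^j` for `j < n` and `-u c^n` for `j = n`, with
`|c| = 1`; then `p(y / c) = -u · cauchyFun p y = 0` is a zero of modulus `ρ[p]`.
-/

open Finset

theorem NormedSpace.normalize_mul {𝕜 : Type*} [RCLike 𝕜] (u v : 𝕜) :
    normalize (u * v) = normalize u * normalize v := by
  simp only [NormedSpace.normalize, norm_mul, mul_inv, smul_mul_smul_comm]

theorem SameRay.normalize_eq {V : Type*} [NormedAddCommGroup V] [NormedSpace ℝ V] {x y : V}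
    (h : SameRay ℝ x y) (hx : x ≠ 0) (hy : y ≠ 0) :
    NormedSpace.normalize x = NormedSpace.normalize y :=
  (sameRay_iff_inv_norm_smul_eq_of_ne hx hy).1 h

theorem sameRay_of_norm_sub_sub_eq {V : Type*} [NormedAddCommGroup V] [NormedSpace ℝ V]
    [StrictConvexSpace ℝ V] {u v w : V} (h : ‖u - v - w‖ = ‖u‖ + ‖v‖ + ‖w‖) :
    SameRay ℝ u (-v) ∧ SameRay ℝ v w := by
  have h₁ := norm_sub_le (u - v) w
  have h₂ := norm_sub_le u v
  have h₃ := norm_sub_le u (v + w)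
  have h₄ := norm_add_le v w
  rw [← sub_sub] at h₃
  constructor
  · rw [sameRay_iff_norm_add, ← sub_eq_add_neg, norm_neg]; linarith
  · rw [sameRay_iff_norm_add]; linarith

theorem exists_eq_pow_mul_of_recurrence {e : ℕ → ℂ} {d : ℕ} (hd : 1 ≤ d) (he0 : e 0 ≠ 0)
    (he : e (d + 1) ≠ 0) (hstep : ∀ j < d, e (d + 2) * e j = -(e (d + 1) * e (j + 1)))
    (hone : e (d + 1) * e 0 = e d * e 1) :
    ∃ c, (∀ j ≤ d + 1, e j = c ^ j * e 0) ∧ e (d + 2) = -(c ^ (d + 2) * e 0) := by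
  obtain ⟨c, hc⟩ : ∃ c, e (d + 2) = -(c * e (d + 1)) :=
    ⟨-(e (d + 2) / e (d + 1)), by rw [neg_mul, div_mul_cancel₀ _ he, neg_neg]⟩
  have hlow : ∀ j ≤ d, e j = c ^ j * e 0 := by
    intro j
    induction j with
    | zero => simp
    | succ j ih =>
      intro hj
      have hrec := hstep j hj
      rw [hc, ih (by omega)] at hrec
      apply mul_left_cancel₀ he
      linear_combination hrec
  have hsub : e (d + 1) = c ^ (d + 1) * e 0 := by
    apply mul_right_cancel₀ he0
    rw [hone, hlow d le_rfl, hlow 1 hd]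
    ring
  refine ⟨c, fun j hj => ?_, by rw [hc, hsub]; ring⟩
  rcases hj.lt_or_eq with hj | rfl
  · exact hlow j (by omega)
  · exact hsub

theorem coeff_quadratic_mul {R : Type*} [Ring R] (a b c : R) (p : R[X]) (k : ℕ) :
    ((C a * X ^ 2 - C b * X - C c) * p).coeff k =
      a * (X ^ 2 * p).coeff k - b * (X * p).coeff k - c * p.coeff k := by
  simp only [sub_mul, mul_assoc, coeff_sub, coeff_C_mul]

theorem quadratic_sub_sub_eq_add_add {R : Type*} [Ring R] (a b c : R) :
    C a * X ^ 2 - C b * X - C c = C a * X ^ 2 + C (-b) * X + C (-c) := by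
  simp only [map_neg, neg_mul, ← sub_eq_add_neg]

theorem sum_range_norm_coeff_X_pow_mul {R : Type*} [NormedRing R] (p : R[X]) (i N : ℕ)
    (y : ℝ) :
    ∑ k ∈ range (i + N), ‖(X ^ i * p).coeff k‖ * y ^ k =
      y ^ i * ∑ k ∈ range N, ‖p.coeff k‖ * y ^ k := by
  rw [sum_range_add, sum_eq_zero, zero_add, mul_sum]
  · refine sum_congr rfl fun k _ => ?_
    rw [add_comm i k, coeff_X_pow_mul, pow_add]
    ring
  · intro k hk
    rw [coeff_X_pow_mul', if_neg (by simpa using hk), norm_zero, zero_mul]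

theorem cauchyFun_eq_zero_iff {q : ℂ[X]} {x : ℝ} :
    cauchyFun q x = 0 ↔
      ‖q.leadingCoeff‖ * x ^ q.natDegree = ∑ j ∈ range q.natDegree, ‖q.coeff j‖ * x ^ j :=
  sub_eq_zero

theorem cauchyFun_mul_pow_le_mul_pow (q : ℂ[X]) {x y : ℝ} (hy : 0 ≤ y) (hyx : y ≤ x) :
    cauchyFun q y * x ^ q.natDegree ≤ cauchyFun q x * y ^ q.natDegree := by
  have hpow : ∀ j ≤ q.natDegree, x ^ j * y ^ q.natDegree ≤ x ^ q.natDegree * y ^ j := by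
    intro j hj
    obtain ⟨k, hk⟩ := Nat.exists_eq_add_of_le hj
    have hx : 0 ≤ x := hy.trans hyx
    calc x ^ j * y ^ q.natDegree = y ^ j * x ^ j * y ^ k := by rw [hk, pow_add]; ring
      _ ≤ y ^ j * x ^ j * x ^ k := by gcongr
      _ = x ^ q.natDegree * y ^ j := by rw [hk, pow_add]; ring
  simp only [cauchyFun, sub_mul, sum_mul, mul_right_comm _ (y ^ _)]
  refine sub_le_sub_left (sum_le_sum fun j hj => ?_) _
  rw [mul_assoc, mul_assoc]
  exact mul_le_mul_of_nonneg_left (hpow j (mem_range.1 hj).le) (norm_nonneg _)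

theorem lt_of_cauchyFun_eq_zero_of_cauchyFun_pos {q : ℂ[X]} {x y : ℝ} (hy : 0 < y)
    (hqy : 0 < cauchyFun q y) (hqx : cauchyFun q x = 0) : x < y := by
  by_contra! hyx
  have := cauchyFun_mul_pow_le_mul_pow q hy.le hyx
  rw [hqx, zero_mul] at this
  exact this.not_gt (mul_pos hqy (pow_pos (hy.trans_le hyx) _))

theorem eval_div_eq_neg_mul_cauchyFun (p : ℂ[X]) {c u : ℂ} (hc : c ≠ 0)
    (hlow : ∀ j < p.natDegree, NormedSpace.normalize (p.coeff j) = c ^ j * u)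
    (htop : NormedSpace.normalize p.leadingCoeff = -(c ^ p.natDegree * u)) (y : ℝ) :
    p.eval (y / c) = -(u * cauchyFun p y) := by
  have hpolar : ∀ w : ℂ, w = ‖w‖ * NormedSpace.normalize w := fun w => by
    rw [← Complex.real_smul, NormedSpace.norm_smul_normalize]
  have hcancel : ∀ j, c ^ j * (y / c) ^ j = (y : ℂ) ^ j := fun j => by
    rw [← mul_pow, mul_div_cancel₀ _ hc]
  have hterm : ∀ j ∈ range p.natDegree,
      p.coeff j * (y / c) ^ j = u * ((‖p.coeff j‖ * y ^ j : ℝ) : ℂ) := fun j hj => by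
    nth_rw 1 [hpolar (p.coeff j)]
    rw [hlow j (mem_range.1 hj)]
    push_cast
    linear_combination (‖p.coeff j‖ * u : ℂ) * hcancel j
  rw [eval_eq_sum_range, sum_range_succ, sum_congr rfl hterm, ← mul_sum, ← leadingCoeff]
  nth_rw 1 [hpolar p.leadingCoeff]
  rw [htop, cauchyFun]
  push_cast
  linear_combination (-‖p.leadingCoeff‖ * u : ℂ) * hcancel p.natDegree

noncomputable def q1 (p : ℂ[X]) : ℂ[X] :=
  (C p.leadingCoeff * X ^ 2 - C (p.coeff (p.natDegree - 1)) * X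
    - C (p.coeff (p.natDegree - 2))) * p

noncomputable def q1CoeffBound (p : ℂ[X]) (k : ℕ) : ℝ :=
  ‖p.leadingCoeff‖ * ‖(X ^ 2 * p).coeff k‖ + ‖p.coeff (p.natDegree - 1)‖ * ‖(X * p).coeff k‖
    + ‖p.coeff (p.natDegree - 2)‖ * ‖p.coeff k‖

theorem norm_coeff_q1_le (p : ℂ[X]) (k : ℕ) : ‖(q1 p).coeff k‖ ≤ q1CoeffBound p k := by
  rw [q1, coeff_quadratic_mul, q1CoeffBound, ← norm_mul, ← norm_mul, ← norm_mul]
  exact (norm_sub_le _ _).trans (add_le_add_left (norm_sub_le _ _) _)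

theorem natDegree_q1 {p : ℂ[X]} (hp : p ≠ 0) : (q1 p).natDegree = p.natDegree + 2 := by
  have hlc : p.leadingCoeff ≠ 0 := leadingCoeff_ne_zero.2 hp
  have hm : C p.leadingCoeff * X ^ 2 + C (-p.coeff (p.natDegree - 1)) * X
      + C (-p.coeff (p.natDegree - 2)) ≠ 0 := ne_zero_of_natDegree_gt (n := 0) (by
    rw [natDegree_quadratic hlc]; norm_num)
  rw [q1, quadratic_sub_sub_eq_add_add, natDegree_mul hm hp, natDegree_quadratic hlc, add_comm]

theorem leadingCoeff_q1 (p : ℂ[X]) : (q1 p).leadingCoeff = p.leadingCoeff ^ 2 := by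
  by_cases hp : p = 0
  · simp [hp, q1]
  rw [q1, quadratic_sub_sub_eq_add_add, leadingCoeff_mul,
    leadingCoeff_quadratic (leadingCoeff_ne_zero.2 hp), sq]

theorem cauchyFun_q1_eq_sum {p : ℂ[X]} {y : ℝ} (hn : 2 ≤ p.natDegree)
    (hp : cauchyFun p y = 0) :
    cauchyFun (q1 p) y =
      ∑ k ∈ range p.natDegree, (q1CoeffBound p k - ‖(q1 p).coeff k‖) * y ^ k := by
  obtain ⟨d, hd⟩ : ∃ d, p.natDegree = d + 2 := ⟨_, (Nat.sub_add_cancel hn).symm⟩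
  have hp0 : p ≠ 0 := ne_zero_of_natDegree_gt (n := 0) (by omega)
  have hlc : p.leadingCoeff = p.coeff (d + 2) := by rw [leadingCoeff, hd]
  have hcoeff_top : (q1 p).coeff (d + 3) = 0 := by
    rw [q1, coeff_quadratic_mul, hd, hlc]
    simp only [coeff_X_pow_mul', le_add_iff_nonneg_left, zero_le, ↓reduceIte, Nat.reduceSubDiff,
      coeff_X_mul, add_tsub_cancel_right,
      coeff_eq_zero_of_natDegree_lt (show p.natDegree < d + 3 by omega), mul_zero, sub_zero]
    ring
  have hcoeff_sub : (q1 p).coeff (d + 2) = -p.coeff (d + 1) ^ 2 := by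
    rw [q1, coeff_quadratic_mul, hd, hlc]
    simp only [coeff_X_pow_mul', le_add_iff_nonneg_left, zero_le, ↓reduceIte,
      add_tsub_cancel_right, Nat.add_one_sub_one, coeff_X_mul]
    ring
  have hX2 : ∑ k ∈ range (d + 2), ‖(X ^ 2 * p).coeff k‖ * y ^ k =
      y ^ 2 * ∑ k ∈ range d, ‖p.coeff k‖ * y ^ k := by
    rw [add_comm]; exact sum_range_norm_coeff_X_pow_mul p 2 d y
  have hX : ∑ k ∈ range (d + 2), ‖(X * p).coeff k‖ * y ^ k =
      y * ∑ k ∈ range (d + 1), ‖p.coeff k‖ * y ^ k := by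
    simpa [add_comm 1, add_assoc] using sum_range_norm_coeff_X_pow_mul p 1 (d + 1) y
  rw [cauchyFun_eq_zero_iff, hd, hlc, sum_range_succ, sum_range_succ] at hp
  rw [cauchyFun, natDegree_q1 hp0, leadingCoeff_q1, hd, sum_range_succ, sum_range_succ,
    hcoeff_top, hcoeff_sub]
  simp only [q1CoeffBound, hd, hlc, sub_mul, add_mul, sum_sub_distrib, sum_add_distrib, mul_assoc,
    ← mul_sum, hX2, hX, sum_range_succ, show d + 2 - 1 = d + 1 from rfl,
    show d + 2 - 2 = d from rfl]
  simp only [norm_neg, norm_pow, norm_zero, zero_mul, add_zero]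
  -- the Cauchy equation of `p`, multiplied by `b_n y² + b_{n-1} y + b_{n-2}`
  linear_combination (‖p.coeff (d + 2)‖ * y ^ 2 + ‖p.coeff (d + 1)‖ * y + ‖p.coeff d‖) * hp

theorem norm_coeff_q1_eq_of_cauchyFun_nonpos {p : ℂ[X]} {y : ℝ} (hn : 2 ≤ p.natDegree)
    (hy : 0 < y) (hp : cauchyFun p y = 0) (hq : cauchyFun (q1 p) y ≤ 0) :
    ∀ k < p.natDegree, ‖(q1 p).coeff k‖ = q1CoeffBound p k := by
  have hterm : ∀ k ∈ range p.natDegree, 0 ≤ (q1CoeffBound p k - ‖(q1 p).coeff k‖) * y ^ k :=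
    fun k _ => mul_nonneg (sub_nonneg.2 (norm_coeff_q1_le p k)) (by positivity)
  rw [cauchyFun_q1_eq_sum hn hp] at hq
  have hzero := (sum_eq_zero_iff_of_nonneg hterm).1 (le_antisymm hq (sum_nonneg hterm))
  intro k hk
  rcases mul_eq_zero.1 (hzero k (mem_range.2 hk)) with h | h
  · linarith
  · exact absurd h (pow_ne_zero _ hy.ne')

theorem normalize_coeff_recurrence {p : ℂ[X]} {d : ℕ} (hd : p.natDegree = d + 2)
    (ha : ∀ j ≤ d + 2, p.coeff j ≠ 0)
    (h : ∀ k < p.natDegree, ‖(q1 p).coeff k‖ = q1CoeffBound p k) :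
    (∀ j < d, NormedSpace.normalize (p.coeff (d + 2)) * NormedSpace.normalize (p.coeff j) =
        -(NormedSpace.normalize (p.coeff (d + 1)) * NormedSpace.normalize (p.coeff (j + 1)))) ∧
      NormedSpace.normalize (p.coeff (d + 1)) * NormedSpace.normalize (p.coeff 0) =
        NormedSpace.normalize (p.coeff d) * NormedSpace.normalize (p.coeff 1) := by
  have hray : ∀ k < d + 2,
      SameRay ℝ (p.coeff (d + 2) * (X ^ 2 * p).coeff k) (-(p.coeff (d + 1) * (X * p).coeff k)) ∧
        SameRay ℝ (p.coeff (d + 1) * (X * p).coeff k) (p.coeff d * p.coeff k) := by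
    intro k hk
    apply sameRay_of_norm_sub_sub_eq
    have := h k (hd ▸ hk)
    rw [q1, coeff_quadratic_mul, q1CoeffBound, leadingCoeff, hd] at this
    simpa only [show d + 2 - 1 = d + 1 from rfl, show d + 2 - 2 = d from rfl, norm_mul] using this
  constructor
  · intro j hj
    have hj' := (hray (j + 2) (by omega)).1
    simp only [coeff_X_pow_mul, show j + 2 = j + 1 + 1 from rfl, coeff_X_mul] at hj'
    have := hj'.normalize_eq (mul_ne_zero (ha _ le_rfl) (ha j (by omega)))
      (neg_ne_zero.2 (mul_ne_zero (ha _ (by omega)) (ha _ (by omega))))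
    rwa [NormedSpace.normalize_neg, NormedSpace.normalize_mul, NormedSpace.normalize_mul] at this
  · have h1 := (hray 1 (by omega)).2
    have hX1 : (X * p).coeff 1 = p.coeff 0 := coeff_X_mul p 0
    rw [hX1] at h1
    have := h1.normalize_eq (mul_ne_zero (ha _ (by omega)) (ha 0 (by omega)))
      (mul_ne_zero (ha _ (by omega)) (ha _ (by omega)))
    rwa [NormedSpace.normalize_mul, NormedSpace.normalize_mul] at this

theorem exists_normalize_coeff_eq_pow_mul {p : ℂ[X]} (hn : 3 ≤ p.natDegree)
    (ha : ∀ j ≤ p.natDegree, p.coeff j ≠ 0)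
    (h : ∀ k < p.natDegree, ‖(q1 p).coeff k‖ = q1CoeffBound p k) :
    ∃ c u : ℂ, ‖c‖ = 1 ∧
      (∀ j < p.natDegree, NormedSpace.normalize (p.coeff j) = c ^ j * u) ∧
      NormedSpace.normalize p.leadingCoeff = -(c ^ p.natDegree * u) := by
  obtain ⟨d, hd⟩ : ∃ d, p.natDegree = d + 2 := ⟨_, (Nat.sub_add_cancel (by omega)).symm⟩
  rw [hd] at ha hn
  have hne : ∀ j ≤ d + 2, NormedSpace.normalize (p.coeff j) ≠ 0 := fun j hj =>
    (NormedSpace.normalize_eq_zero_iff _).not.2 (ha j hj)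
  obtain ⟨hstep, hone⟩ := normalize_coeff_recurrence hd ha h
  obtain ⟨c, hlow, htop⟩ := exists_eq_pow_mul_of_recurrence
    (e := fun j => NormedSpace.normalize (p.coeff j)) (by omega) (hne 0 (by omega))
    (hne _ (by omega)) hstep hone
  refine ⟨c, _, ?_, fun j hj => hlow j (by omega), by rw [leadingCoeff, hd]; exact htop⟩
  have h1 := congrArg norm (hlow 1 (by omega))
  simpa [NormedSpace.norm_normalize (ha _ _)] using h1.symm

theorem strict_improvement_q1_general
    (p : Polynomial ℂ) (n : ℕ) (hn : p.natDegree = n) (hn3 : 3 ≤ n)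
    (ha : ∀ j ≤ n, p.coeff j ≠ 0)
    (x y : ℝ) (hy : 0 < y)
    (hxroot : cauchyFun
      ((C (p.coeff n) * X ^ 2 - C (p.coeff (n - 1)) * X - C (p.coeff (n - 2))) * p) x = 0)
    (hyroot : cauchyFun p y = 0)
    (hnozero : ∀ z : ℂ, p.eval z = 0 → ‖z‖ ≠ y) :
    x < y := by
  subst hn
  refine lt_of_cauchyFun_eq_zero_of_cauchyFun_pos hy ?_ hxroot
  by_contra! hq
  obtain ⟨c, u, hc, hlow, htop⟩ := exists_normalize_coeff_eq_pow_mul hn3 ha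
    (norm_coeff_q1_eq_of_cauchyFun_nonpos (by omega) hy hyroot hq)
  refine hnozero (y / c) ?_ ?_
  · rw [eval_div_eq_neg_mul_cauchyFun p (norm_ne_zero_iff.1 (hc ▸ one_ne_zero)) hlow htop,
      hyroot, Complex.ofReal_zero, mul_zero, neg_zero]
  · rw [norm_div, hc, Complex.norm_real, Real.norm_of_nonneg hy.le, div_one]

/-- Strictness: if all coefficients of `p` are nonzero and `p` has no zero of modulus
`ρ[p]`, then `ρ[(aₙ z² - a_{n-1} z - a_{n-2}) p] < ρ[p]` strictly. -/
theorem strict_improvement_q1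
    (p : Polynomial ℂ) (n : ℕ) (hn : p.natDegree = n) (hn3 : 3 ≤ n)
    (ha : ∀ j ≤ n, p.coeff j ≠ 0)
    (x y : ℝ) (hx : 0 < x) (hy : 0 < y)
    (hxroot : cauchyFun
      ((C (p.coeff n) * X ^ 2 - C (p.coeff (n - 1)) * X - C (p.coeff (n - 2))) * p) x = 0)
    (hyroot : cauchyFun p y = 0)
    (hnozero : ∀ z : ℂ, p.eval z = 0 → ‖z‖ ≠ y) :
    x < y :=
  strict_improvement_q1_general p n hn hn3 ha x y hy hxroot hyroot hnozero
end

section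
/- Let P(z) = A_n z^n + ... + A_1 z + A_0 be a matrix polynomial with complex m×m coefficient matrices, A_n invertible, n ≥ 1, and not all A_j (j < n) the zero matrix. Fix a matrix norm ‖·‖ (submultiplicative). Then every eigenvalue λ of P (i.e., every λ ∈ ℂ with det P(λ) = 0) satisfies |λ| ≤ ρ[P], where ρ[P] is the unique positive solution of ‖A_n^{-1}‖^{-1} x^n = ‖A_{n-1}‖ x^{n-1} + ... + ‖A_1‖ x + ‖A_0‖. -/
/-! Suppose `‖λ‖ > ρ`. A nonzero matrix `V` with `P(λ) V = 0` satisfies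
`Aₙ⁻¹ (∑_{j<n} λ^j Aⱼ) V = -λⁿ V`, so submultiplicativity gives
`‖λ‖ⁿ ≤ ‖Aₙ⁻¹‖ ∑_{j<n} ‖Aⱼ‖ ‖λ‖^j`. But `x ↦ ∑_{j<n} ‖Aⱼ‖ x^(j+1-n)` has only nonpositive
exponents, hence does not increase from `ρ` to `‖λ‖`; with the defining equation of `ρ` this
yields the reverse strict inequality. -/

open Finset

lemma pow_mul_pow_le_pow_mul_pow {ρ r : ℝ} (hρ : 0 ≤ ρ) (hρr : ρ ≤ r) {i n : ℕ} (hin : i ≤ n) :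
    r ^ i * ρ ^ n ≤ ρ ^ i * r ^ n := by
  obtain ⟨k, rfl⟩ := Nat.exists_eq_add_of_le hin
  have hr : 0 ≤ r := hρ.trans hρr
  calc r ^ i * ρ ^ (i + k) = (r ^ i * ρ ^ i) * ρ ^ k := by ring
    _ ≤ (r ^ i * ρ ^ i) * r ^ k := by gcongr
    _ = ρ ^ i * r ^ (i + k) := by ring

lemma mul_pow_mul_sum_le {a : ℕ → ℝ} (ha : ∀ j, 0 ≤ a j) {ρ r : ℝ} (hρ : 0 ≤ ρ) (hρr : ρ ≤ r)
    (n : ℕ) :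
    r * ρ ^ n * ∑ j ∈ range n, a j * r ^ j ≤ ρ * r ^ n * ∑ j ∈ range n, a j * ρ ^ j := by
  simp only [mul_sum]
  refine sum_le_sum fun j hj => ?_
  calc r * ρ ^ n * (a j * r ^ j) = a j * (r ^ (j + 1) * ρ ^ n) := by ring
    _ ≤ a j * (ρ ^ (j + 1) * r ^ n) :=
      mul_le_mul_of_nonneg_left (pow_mul_pow_le_pow_mul_pow hρ hρr (mem_range.mp hj)) (ha j)
    _ = ρ * r ^ n * (a j * ρ ^ j) := by ring

lemma mul_sum_lt_pow_of_inv_mul_pow_eq_sum {a : ℕ → ℝ} (ha : ∀ j, 0 ≤ a j) {c ρ r : ℝ}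
    (hc : 0 ≤ c) (hρ : 0 < ρ) (hρr : ρ < r) {n : ℕ}
    (hroot : c⁻¹ * ρ ^ n = ∑ j ∈ range n, a j * ρ ^ j) :
    c * ∑ j ∈ range n, a j * r ^ j < r ^ n := by
  have hr : 0 < r := hρ.trans hρr
  rcases hc.eq_or_lt with rfl | hc
  · simpa using pow_pos hr n
  have hmono := mul_pow_mul_sum_le ha hρ.le hρr.le n
  rw [← hroot] at hmono
  have key : r * (c * ∑ j ∈ range n, a j * r ^ j) * ρ ^ n ≤ ρ * r ^ n * ρ ^ n := by
    calc r * (c * ∑ j ∈ range n, a j * r ^ j) * ρ ^ n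
        = c * (r * ρ ^ n * ∑ j ∈ range n, a j * r ^ j) := by ring
      _ ≤ c * (ρ * r ^ n * (c⁻¹ * ρ ^ n)) := by gcongr
      _ = ρ * r ^ n * ρ ^ n := by field_simp
  have hle : r * (c * ∑ j ∈ range n, a j * r ^ j) ≤ ρ * r ^ n :=
    le_of_mul_le_mul_right key (pow_pos hρ n)
  exact lt_of_mul_lt_mul_left (hle.trans_lt (mul_lt_mul_of_pos_right hρr (pow_pos hr n))) hr.le

lemma Seminorm.norm_le_of_mul_eq_smul {𝕜 R : Type*} [NormedField 𝕜] [NonUnitalRing R]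
    [Module 𝕜 R] (p : Seminorm 𝕜 R) (hmul : ∀ x y, p (x * y) ≤ p x * p y) {X V : R} {c : 𝕜}
    (hV : p V ≠ 0) (h : X * V = c • V) : ‖c‖ ≤ p X := by
  have hV : 0 < p V := (apply_nonneg p V).lt_of_ne' hV
  refine le_of_mul_le_mul_right ?_ hV
  calc ‖c‖ * p V = p (X * V) := by rw [h, map_smul_eq_mul]
    _ ≤ p X * p V := hmul X V

lemma Matrix.exists_ne_zero_mul_eq_zero_of_det_eq_zero {n K : Type*} [Fintype n] [DecidableEq n]
    [Field K] {M : Matrix n n K} (h : M.det = 0) : ∃ V : Matrix n n K, V ≠ 0 ∧ M * V = 0 := by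
  obtain ⟨v, hv, hMv⟩ := Matrix.exists_mulVec_eq_zero_iff.mpr h
  obtain ⟨i, -⟩ := Function.ne_iff.mp hv
  have : Nonempty n := ⟨i⟩
  exact ⟨replicateCol n v, by simpa using hv, by rw [← replicateCol_mulVec, hMv, replicateCol_zero]⟩

lemma Matrix.exists_ne_zero_inv_mul_sum_mul_eq_neg_pow_smul {n K : Type*} [Fintype n]
    [DecidableEq n] [Field K] {d : ℕ} {A : ℕ → Matrix n n K} (hA : IsUnit (A d)) {z : K}
    (hz : (∑ j ∈ range (d + 1), z ^ j • A j).det = 0) :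
    ∃ V : Matrix n n K, V ≠ 0 ∧ ((A d)⁻¹ * ∑ j ∈ range d, z ^ j • A j) * V = (-z ^ d) • V := by
  obtain ⟨V, hV0, hV⟩ := exists_ne_zero_mul_eq_zero_of_det_eq_zero hz
  refine ⟨V, hV0, ?_⟩
  rw [sum_range_succ, add_mul, add_eq_zero_iff_eq_neg] at hV
  have hdet := (isUnit_iff_isUnit_det _).mp hA
  rw [mul_assoc, hV, smul_mul_assoc, mul_neg, mul_smul_comm, ← mul_assoc, nonsing_inv_mul _ hdet,
    one_mul, neg_smul]

theorem matrix_polynomial_cauchy_bound_general {m : ℕ}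
    (n : ℕ) (A : ℕ → Matrix (Fin m) (Fin m) ℂ)
    (hinv : IsUnit (A n))
    (N : Matrix (Fin m) (Fin m) ℂ → ℝ)
    (hN0 : ∀ M, N M = 0 ↔ M = 0)
    (hNsmul : ∀ (c : ℂ) M, N (c • M) = ‖c‖ * N M)
    (hNadd : ∀ M₁ M₂, N (M₁ + M₂) ≤ N M₁ + N M₂)
    (hNmul : ∀ M₁ M₂, N (M₁ * M₂) ≤ N M₁ * N M₂)
    (ρ : ℝ) (hρ : 0 < ρ)
    (hroot : (N (A n)⁻¹)⁻¹ * ρ ^ n = ∑ j ∈ Finset.range n, N (A j) * ρ ^ j)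
    (lam : ℂ)
    (hlam : (∑ j ∈ Finset.range (n + 1), lam ^ j • A j).det = 0) :
    ‖lam‖ ≤ ρ := by
  let p : Seminorm ℂ (Matrix (Fin m) (Fin m) ℂ) := Seminorm.of N hNadd hNsmul
  by_contra! hlt
  obtain ⟨V, hV0, hV⟩ := Matrix.exists_ne_zero_inv_mul_sum_mul_eq_neg_pow_smul hinv hlam
  have hsum_le : p (∑ j ∈ range n, lam ^ j • A j) ≤ ∑ j ∈ range n, p (A j) * ‖lam‖ ^ j :=
    (le_sum_of_subadditive p (map_zero p).le (map_add_le_add p) _ _).trans_eq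
      (sum_congr rfl fun j _ => by rw [map_smul_eq_mul, norm_pow, mul_comm])
  refine lt_irrefl (‖lam‖ ^ n) ?_
  calc ‖lam‖ ^ n = ‖-lam ^ n‖ := by rw [norm_neg, norm_pow]
    _ ≤ p ((A n)⁻¹ * ∑ j ∈ range n, lam ^ j • A j) :=
      p.norm_le_of_mul_eq_smul hNmul (fun h => hV0 ((hN0 V).mp h)) hV
    _ ≤ p (A n)⁻¹ * p (∑ j ∈ range n, lam ^ j • A j) := hNmul _ _
    _ ≤ p (A n)⁻¹ * ∑ j ∈ range n, p (A j) * ‖lam‖ ^ j :=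
      mul_le_mul_of_nonneg_left hsum_le (apply_nonneg p _)
    _ < ‖lam‖ ^ n := mul_sum_lt_pow_of_inv_mul_pow_eq_sum (fun j => apply_nonneg p (A j))
      (apply_nonneg p _) hρ hlt hroot

/-- Cauchy's bound for matrix polynomials: every eigenvalue `λ` (with `det P(λ) = 0`)
satisfies `|λ| ≤ ρ[P]`, the unique positive root of
`‖Aₙ⁻¹‖⁻¹ xⁿ = Σ_{j<n} ‖Aⱼ‖ xʲ`, for any submultiplicative matrix norm. -/
theorem matrix_polynomial_cauchy_bound {m : ℕ}
    (n : ℕ) (hn : 1 ≤ n) (A : ℕ → Matrix (Fin m) (Fin m) ℂ)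
    (hinv : IsUnit (A n)) (hlow : ∃ j < n, A j ≠ 0)
    (N : Matrix (Fin m) (Fin m) ℂ → ℝ)
    (hN0 : ∀ M, N M = 0 ↔ M = 0)
    (hNsmul : ∀ (c : ℂ) M, N (c • M) = ‖c‖ * N M)
    (hNadd : ∀ M₁ M₂, N (M₁ + M₂) ≤ N M₁ + N M₂)
    (hNmul : ∀ M₁ M₂, N (M₁ * M₂) ≤ N M₁ * N M₂)
    (ρ : ℝ) (hρ : 0 < ρ)
    (hroot : (N (A n)⁻¹)⁻¹ * ρ ^ n = ∑ j ∈ Finset.range n, N (A j) * ρ ^ j)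
    (lam : ℂ)
    (hlam : (∑ j ∈ Finset.range (n + 1), lam ^ j • A j).det = 0) :
    ‖lam‖ ≤ ρ :=
  matrix_polynomial_cauchy_bound_general n A hinv N hN0 hNsmul hNadd hNmul ρ hρ hroot lam hlam
end

section
/- Let P(z) = Σ_{j=0}^n A_j z^j be a matrix polynomial with square complex matrix coefficients, A_n invertible, having at least three nonzero coefficient matrices, and let k, ℓ be the smallest positive integers such that A_{n-k} ≠ 0 and A_{n-k-ℓ} ≠ 0. Let ‖·‖ be a submultiplicative matrix norm with ‖A_n^{-2}‖^{-1} = ‖A_n‖ ‖A_n^{-1}‖^{-1}, and assume A_n commutes with A_{n-k} and with A_{n-k-ℓ}. Define Q(z) = (A_n z^{k+ℓ} − A_{n-k} z^ℓ − A_{n-k-ℓ}) P(z). Then ρ[Q] ≤ ρ[P]. -/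
/-!
Write `a = ‖Aₙ‖`, `b = ‖Aₙ⁻¹‖⁻¹`, `c = ‖A_{n-k}‖`, `d = ‖A_{n-k-ℓ}‖` and let `y = ρ[P]`, so that
`∑_{j<n} ‖A_j‖ yʲ = b yⁿ`. The triangle inequality bounds `‖Q_j‖` by the coefficients of
`(a z^{k+ℓ} + c z^ℓ + d) · ∑ ‖A_j‖ zʲ`, whose lower part evaluated at `y` is
`a b y^{n+k+ℓ} + (c y^ℓ + d)(a + b) yⁿ`. Commutation gives `Qₙ = -A_{n-k} A_{n-ℓ}` and
`Q_{n+ℓ} = 0`, saving `2ad yⁿ` and `2ac y^{n+ℓ}`, so the lower coefficients of `Q` sum at `y`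
to at most `a b y^{n+k+ℓ} - (a - b)(c y^{n+ℓ} + d yⁿ) ≤ a b y^{n+k+ℓ}`, as `b ≤ a` by
submultiplicativity. Since `‖Aₙ⁻²‖⁻¹ = a b` and `∑ q_j t^{j-M}` decreases in `t > 0`,
the Cauchy radius of `Q` is at most `y`.
-/

/-- Coefficients of the product of two matrix polynomials given by their
coefficient sequences (Cauchy product). -/
noncomputable def Qcoeff {m : ℕ} (T A : ℕ → Matrix (Fin m) (Fin m) ℂ) (j : ℕ) :
    Matrix (Fin m) (Fin m) ℂ :=
  ∑ i ∈ Finset.range (j + 1), T i * A (j - i)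

/-- Coefficients of the multiplier `Aₙ z^{k+ℓ} - A_{n-k} z^ℓ - A_{n-k-ℓ}`. -/
noncomputable def mult1 {m : ℕ} (A : ℕ → Matrix (Fin m) (Fin m) ℂ) (n k ℓ : ℕ) (i : ℕ) :
    Matrix (Fin m) (Fin m) ℂ :=
  if i = k + ℓ then A n else if i = ℓ then -A (n - k)
    else if i = 0 then -A (n - k - ℓ) else 0

open Finset

theorem RingNorm.inv_le_of_mul_eq_one {R : Type*} [Ring R] [Nontrivial R] (p : RingNorm R)
    {u v : R} (h : u * v = 1) : (p v)⁻¹ ≤ p u := by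
  have hv : 0 < p v := map_pos_of_ne_zero p (right_ne_zero_of_mul_eq_one h)
  have hone : 1 ≤ p 1 := by
    have h1 : 0 < p 1 := map_pos_of_ne_zero p one_ne_zero
    have := map_mul_le_mul p 1 1
    rw [one_mul] at this
    nlinarith
  rw [inv_le_iff_one_le_mul₀ hv]
  calc 1 ≤ p 1 := hone
    _ = p (u * v) := by rw [h]
    _ ≤ p u * p v := map_mul_le_mul p u v

theorem le_of_pow_eq_sum_of_sum_le_pow {c x y : ℝ} {M : ℕ} {q : ℕ → ℝ} (hc : 0 < c)
    (hx : 0 < x) (hy : 0 < y) (hq : ∀ j, 0 ≤ q j)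
    (hxe : c * x ^ M = ∑ j ∈ range M, q j * x ^ j)
    (hye : ∑ j ∈ range M, q j * y ^ j ≤ c * y ^ M) : x ≤ y := by
  obtain _ | M := M
  · simp only [pow_zero, mul_one, range_zero, sum_empty] at hxe
    exact absurd hxe hc.ne'
  by_contra! hyx
  have key : ∀ j ∈ range (M + 1), q j * x ^ j * y ^ M ≤ q j * y ^ j * x ^ M := by
    intro j hj
    obtain ⟨t, rfl⟩ : ∃ t, M = j + t := ⟨M - j, by grind⟩
    have : y ^ t ≤ x ^ t := pow_le_pow_left₀ hy.le hyx.le t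
    have : 0 ≤ q j * x ^ j * y ^ j := by have := hq j; positivity
    calc q j * x ^ j * y ^ (j + t) = q j * x ^ j * y ^ j * y ^ t := by ring
      _ ≤ q j * x ^ j * y ^ j * x ^ t := by gcongr
      _ = q j * y ^ j * x ^ (j + t) := by ring
  have hsum : c * x ^ (M + 1) * y ^ M ≤ c * y ^ (M + 1) * x ^ M := by
    rw [hxe, sum_mul]
    refine (sum_le_sum key).trans ?_
    rw [← sum_mul]
    gcongr
  have := mul_lt_mul_of_pos_right hyx (by positivity : 0 < c * x ^ M * y ^ M)
  rw [pow_succ, pow_succ] at hsum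
  linarith

theorem sum_range_shift_mul_pow {R : Type*} [CommSemiring R] (f : ℕ → R) (y : R) (s M : ℕ) :
    ∑ j ∈ range (s + M), (if s ≤ j then f (j - s) else 0) * y ^ j
      = y ^ s * ∑ j ∈ range M, f j * y ^ j := by
  rw [sum_range_add, mul_sum, sum_eq_zero fun j hj => by grind]
  simp only [le_add_iff_nonneg_right, zero_le, if_true, add_tsub_cancel_left, pow_add, zero_add]
  exact sum_congr rfl fun j _ => by ring

theorem sum_range_eq_add_of_eq_zero {R : Type*} [AddCommMonoid R] {f : ℕ → R} {n M : ℕ}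
    (hf : ∀ j, n < j → f j = 0) (hM : n < M) :
    ∑ j ∈ range M, f j = ∑ j ∈ range n, f j + f n := by
  rw [← sum_range_succ]
  exact (sum_subset (range_subset_range.2 hM) fun j hj hj' => hf j (by grind)).symm

theorem sum_add_add_le_sum {ι β : Type*} [AddCommMonoid β] [PartialOrder β]
    [IsOrderedAddMonoid β] {s : Finset ι} {f g : ι → β} {i i' : ι} {δ δ' : β}
    (hi : i ∈ s) (hi' : i' ∈ s) (hne : i ≠ i') (hfg : ∀ j ∈ s, f j ≤ g j)
    (hδ : f i + δ ≤ g i) (hδ' : f i' + δ' ≤ g i') :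
    ∑ j ∈ s, f j + δ + δ' ≤ ∑ j ∈ s, g j := by
  classical
  have hi'' : i' ∈ s.erase i := mem_erase.2 ⟨hne.symm, hi'⟩
  rw [← add_sum_erase s f hi, ← add_sum_erase s g hi, ← add_sum_erase _ f hi'',
    ← add_sum_erase _ g hi'']
  have hrest : ∑ j ∈ (s.erase i).erase i', f j ≤ ∑ j ∈ (s.erase i).erase i', g j :=
    sum_le_sum fun j hj => hfg j (mem_of_mem_erase (mem_of_mem_erase hj))
  calc f i + (f i' + ∑ j ∈ (s.erase i).erase i', f j) + δ + δ'
      = (f i + δ) + ((f i' + δ') + ∑ j ∈ (s.erase i).erase i', f j) := by abel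
    _ ≤ g i + (g i' + ∑ j ∈ (s.erase i).erase i', g j) := by gcongr

/-- The coefficients of `(p Aₙ z^{k+ℓ} + p A_{n-k} z^ℓ + p A_{n-k-ℓ}) · ∑ p A_j z^j`. -/
noncomputable def majorantCoeff {m : ℕ} (p : RingSeminorm (Matrix (Fin m) (Fin m) ℂ))
    (A : ℕ → Matrix (Fin m) (Fin m) ℂ) (n k ℓ j : ℕ) : ℝ :=
  p (A n) * (if k + ℓ ≤ j then p (A (j - (k + ℓ))) else 0)
    + p (A (n - k)) * (if ℓ ≤ j then p (A (j - ℓ)) else 0) + p (A (n - k - ℓ)) * p (A j)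

section Multiplier

variable {m : ℕ} (A : ℕ → Matrix (Fin m) (Fin m) ℂ) {n k ℓ : ℕ}

theorem mult1_eq (hk : 0 < k) (hℓ : 0 < ℓ) (i : ℕ) :
    mult1 A n k ℓ i = (if i = k + ℓ then A n else 0) + (if i = ℓ then -A (n - k) else 0)
      + (if i = 0 then -A (n - k - ℓ) else 0) := by
  unfold mult1
  split_ifs <;> first | omega | simp

theorem Qcoeff_mult1 (hk : 0 < k) (hℓ : 0 < ℓ) (j : ℕ) :
    Qcoeff (mult1 A n k ℓ) A j
      = (if k + ℓ ≤ j then A n * A (j - (k + ℓ)) else 0)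
        + (if ℓ ≤ j then -A (n - k) * A (j - ℓ) else 0) - A (n - k - ℓ) * A j := by
  simp [Qcoeff, mult1_eq A hk hℓ, add_mul, ite_mul, sum_add_distrib, sum_ite_eq',
    sub_eq_add_neg]

theorem Qcoeff_mult1_self (hk : 0 < k) (hℓ : 0 < ℓ) (hkl : k + ℓ ≤ n)
    (hcomm : A n * A (n - k - ℓ) = A (n - k - ℓ) * A n) :
    Qcoeff (mult1 A n k ℓ) A n = -(A (n - k) * A (n - ℓ)) := by
  rw [Qcoeff_mult1 A hk hℓ, if_pos hkl, if_pos (by omega), ← Nat.sub_sub, hcomm]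
  noncomm_ring

theorem Qcoeff_mult1_self_add_eq_zero (hk : 0 < k) (hℓ : 0 < ℓ) (hkl : k + ℓ ≤ n)
    (hdeg : ∀ j, n < j → A j = 0) (hcomm : A n * A (n - k) = A (n - k) * A n) :
    Qcoeff (mult1 A n k ℓ) A (n + ℓ) = 0 := by
  rw [Qcoeff_mult1 A hk hℓ, if_pos (by omega), if_pos (by omega),
    show n + ℓ - (k + ℓ) = n - k by omega, Nat.add_sub_cancel, hdeg (n + ℓ) (by omega), hcomm]
  simp

variable (p : RingSeminorm (Matrix (Fin m) (Fin m) ℂ))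

theorem map_Qcoeff_mult1_le (hk : 0 < k) (hℓ : 0 < ℓ) (j : ℕ) :
    p (Qcoeff (mult1 A n k ℓ) A j) ≤ majorantCoeff p A n k ℓ j := by
  rw [Qcoeff_mult1 A hk hℓ]
  refine (map_sub_le_add p _ _).trans (add_le_add ((map_add_le_add p _ _).trans
    (add_le_add ?_ ?_)) (map_mul_le_mul p _ _))
  · split_ifs <;> simp [map_mul_le_mul]
  · split_ifs <;> simp [map_mul_le_mul]

theorem sum_majorantCoeff_mul_pow (hdeg : ∀ j, n < j → A j = 0) (hk : 0 < k) (y : ℝ) :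
    ∑ j ∈ range (n + k + ℓ), majorantCoeff p A n k ℓ j * y ^ j
      = p (A n) * y ^ (k + ℓ) * ∑ j ∈ range n, p (A j) * y ^ j
        + (p (A (n - k)) * y ^ ℓ + p (A (n - k - ℓ)))
          * (∑ j ∈ range n, p (A j) * y ^ j + p (A n) * y ^ n) := by
  have htail : ∀ M, n < M → ∑ j ∈ range M, p (A j) * y ^ j
      = ∑ j ∈ range n, p (A j) * y ^ j + p (A n) * y ^ n := fun M hM =>
    sum_range_eq_add_of_eq_zero (fun j hj => by simp [hdeg j hj]) hM
  have h1 := sum_range_shift_mul_pow (fun j => p (A j)) y (k + ℓ) n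
  have h2 := sum_range_shift_mul_pow (fun j => p (A j)) y ℓ (n + k)
  rw [show k + ℓ + n = n + k + ℓ by ring] at h1
  rw [show ℓ + (n + k) = n + k + ℓ by ring, htail _ (by omega)] at h2
  simp only [majorantCoeff, add_mul, sum_add_distrib, mul_assoc, ← mul_sum, h1, h2,
    htail _ (by omega : n < n + k + ℓ)]
  ring

theorem sum_map_Qcoeff_mult1_add_le (hdeg : ∀ j, n < j → A j = 0) (hk : 0 < k) (hℓ : 0 < ℓ)
    (hkl : k + ℓ ≤ n) (hcomm1 : A n * A (n - k) = A (n - k) * A n)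
    (hcomm2 : A n * A (n - k - ℓ) = A (n - k - ℓ) * A n) {y : ℝ} (hy : 0 ≤ y) :
    ∑ j ∈ range (n + k + ℓ), p (Qcoeff (mult1 A n k ℓ) A j) * y ^ j
        + 2 * p (A n) * p (A (n - k - ℓ)) * y ^ n + 2 * p (A n) * p (A (n - k)) * y ^ (n + ℓ)
      ≤ ∑ j ∈ range (n + k + ℓ), majorantCoeff p A n k ℓ j * y ^ j := by
  refine sum_add_add_le_sum (mem_range.2 (by omega : n < n + k + ℓ))
    (mem_range.2 (by omega : n + ℓ < n + k + ℓ)) (by omega : n ≠ n + ℓ)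
    (fun j _ => by gcongr; exact map_Qcoeff_mult1_le A p hk hℓ j) ?_ ?_
  · have := mul_le_mul_of_nonneg_right (map_mul_le_mul p (A (n - k)) (A (n - ℓ)))
      (pow_nonneg hy n)
    rw [Qcoeff_mult1_self A hk hℓ hkl hcomm2, map_neg_eq_map]
    simp only [majorantCoeff, if_pos hkl, if_pos (by omega : ℓ ≤ n), ← Nat.sub_sub]
    linarith
  · rw [Qcoeff_mult1_self_add_eq_zero A hk hℓ hkl hdeg hcomm1, map_zero]
    simp only [majorantCoeff, if_pos (by omega : k + ℓ ≤ n + ℓ), if_pos (by omega : ℓ ≤ n + ℓ),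
      show n + ℓ - (k + ℓ) = n - k by omega, Nat.add_sub_cancel, hdeg (n + ℓ) (by omega), map_zero]
    linarith

theorem sum_map_Qcoeff_mult1_le (hdeg : ∀ j, n < j → A j = 0) (hk : 0 < k) (hℓ : 0 < ℓ)
    (hkl : k + ℓ ≤ n) (hcomm1 : A n * A (n - k) = A (n - k) * A n)
    (hcomm2 : A n * A (n - k - ℓ) = A (n - k - ℓ) * A n) {b y : ℝ} (hy : 0 ≤ y)
    (hb : b ≤ p (A n)) (hyroot : b * y ^ n = ∑ j ∈ range n, p (A j) * y ^ j) :
    ∑ j ∈ range (n + k + ℓ), p (Qcoeff (mult1 A n k ℓ) A j) * y ^ j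
      ≤ p (A n) * b * y ^ (n + k + ℓ) := by
  have h := sum_map_Qcoeff_mult1_add_le A p hdeg hk hℓ hkl hcomm1 hcomm2 hy
  rw [sum_majorantCoeff_mul_pow A p hdeg hk, ← hyroot] at h
  have hc := apply_nonneg p (A (n - k))
  have hd := apply_nonneg p (A (n - k - ℓ))
  have hdefect : 0 ≤ (p (A n) - b) * (p (A (n - k)) * y ^ (n + ℓ) + p (A (n - k - ℓ)) * y ^ n) :=
    mul_nonneg (sub_nonneg.2 hb) (by positivity)
  rw [pow_add y n ℓ] at h hdefect
  rw [show y ^ (n + k + ℓ) = y ^ n * y ^ (k + ℓ) by ring]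
  linarith

end Multiplier

theorem matrix_improved_cauchy_radius_Q1_general {m : ℕ}
    (n : ℕ) (A : ℕ → Matrix (Fin m) (Fin m) ℂ)
    (hdeg : ∀ j, n < j → A j = 0) (hinv : IsUnit (A n))
    (k ℓ : ℕ) (hk : 0 < k) (hℓ : 0 < ℓ) (hkl : k + ℓ ≤ n)
    (hknz : A (n - k) ≠ 0)
    (N : Matrix (Fin m) (Fin m) ℂ → ℝ)
    (hN0 : ∀ M, N M = 0 ↔ M = 0)
    (hNsmul : ∀ (c : ℂ) M, N (c • M) = ‖c‖ * N M)
    (hNadd : ∀ M₁ M₂, N (M₁ + M₂) ≤ N M₁ + N M₂)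
    (hNmul : ∀ M₁ M₂, N (M₁ * M₂) ≤ N M₁ * N M₂)
    (hNsq : (N ((A n)⁻¹ * (A n)⁻¹))⁻¹ = N (A n) * (N (A n)⁻¹)⁻¹)
    (hcomm1 : A n * A (n - k) = A (n - k) * A n)
    (hcomm2 : A n * A (n - k - ℓ) = A (n - k - ℓ) * A n)
    (x y : ℝ) (hx : 0 < x) (hy : 0 < y)
    (hxroot : (N ((A n * A n))⁻¹)⁻¹ * x ^ (n + k + ℓ)
      = ∑ j ∈ Finset.range (n + k + ℓ), N (Qcoeff (mult1 A n k ℓ) A j) * x ^ j)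
    (hyroot : (N (A n)⁻¹)⁻¹ * y ^ n = ∑ j ∈ Finset.range n, N (A j) * y ^ j) :
    x ≤ y := by
  have : Nontrivial (Matrix (Fin m) (Fin m) ℂ) := nontrivial_of_ne _ _ hknz
  let p : RingNorm (Matrix (Fin m) (Fin m) ℂ) :=
    { toFun := N
      map_zero' := (hN0 0).2 rfl
      add_le' := hNadd
      neg' := fun M => by simpa using hNsmul (-1) M
      mul_le' := hNmul
      eq_zero_of_map_eq_zero' := fun M => (hN0 M).1 }
  have hAinv : A n * (A n)⁻¹ = 1 :=
    Matrix.mul_nonsing_inv _ ((Matrix.isUnit_iff_isUnit_det _).1 hinv)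
  have hb : (N (A n)⁻¹)⁻¹ ≤ N (A n) := p.inv_le_of_mul_eq_one hAinv
  have hb_pos : 0 < (N (A n)⁻¹)⁻¹ :=
    inv_pos.2 (map_pos_of_ne_zero p (right_ne_zero_of_mul_eq_one hAinv))
  rw [Matrix.mul_inv_rev, hNsq] at hxroot
  exact le_of_pow_eq_sum_of_sum_le_pow (mul_pos (hb_pos.trans_le hb) hb_pos) hx hy
    (fun j => apply_nonneg p _) hxroot
    (sum_map_Qcoeff_mult1_le A p.toRingSeminorm hdeg hk hℓ hkl hcomm1 hcomm2 hy.le hb hyroot)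

/-- `ρ[(Aₙ z^{k+ℓ} - A_{n-k} z^ℓ - A_{n-k-ℓ}) P(z)] ≤ ρ[P]` under the norm and
commutation assumptions of Theorem 2.1. -/
theorem matrix_improved_cauchy_radius_Q1 {m : ℕ}
    (n : ℕ) (A : ℕ → Matrix (Fin m) (Fin m) ℂ)
    (hdeg : ∀ j, n < j → A j = 0) (hinv : IsUnit (A n))
    (k ℓ : ℕ) (hk : 0 < k) (hℓ : 0 < ℓ) (hkl : k + ℓ ≤ n)
    (hknz : A (n - k) ≠ 0) (hkmin : ∀ j, 0 < j → j < k → A (n - j) = 0)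
    (hlnz : A (n - k - ℓ) ≠ 0) (hlmin : ∀ j, 0 < j → j < ℓ → A (n - k - j) = 0)
    (N : Matrix (Fin m) (Fin m) ℂ → ℝ)
    (hN0 : ∀ M, N M = 0 ↔ M = 0)
    (hNsmul : ∀ (c : ℂ) M, N (c • M) = ‖c‖ * N M)
    (hNadd : ∀ M₁ M₂, N (M₁ + M₂) ≤ N M₁ + N M₂)
    (hNmul : ∀ M₁ M₂, N (M₁ * M₂) ≤ N M₁ * N M₂)
    (hNsq : (N ((A n)⁻¹ * (A n)⁻¹))⁻¹ = N (A n) * (N (A n)⁻¹)⁻¹)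
    (hcomm1 : A n * A (n - k) = A (n - k) * A n)
    (hcomm2 : A n * A (n - k - ℓ) = A (n - k - ℓ) * A n)
    (x y : ℝ) (hx : 0 < x) (hy : 0 < y)
    (hxroot : (N ((A n * A n))⁻¹)⁻¹ * x ^ (n + k + ℓ)
      = ∑ j ∈ Finset.range (n + k + ℓ), N (Qcoeff (mult1 A n k ℓ) A j) * x ^ j)
    (hyroot : (N (A n)⁻¹)⁻¹ * y ^ n = ∑ j ∈ Finset.range n, N (A j) * y ^ j) :
    x ≤ y :=
  matrix_improved_cauchy_radius_Q1_general n A hdeg hinv k ℓ hk hℓ hkl hknz N hN0 hNsmul hNadd hNmul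
    hNsq hcomm1 hcomm2 x y hx hy hxroot hyroot
end

section
/- Let P(z) = Σ_{j=0}^n A_j z^j be a matrix polynomial with square complex matrix coefficients, A_n invertible, having at least three nonzero coefficient matrices, and let k be the smallest positive integer with A_{n-k} ≠ 0. Let ‖·‖ be a submultiplicative matrix norm satisfying ‖A_n^{-2}‖^{-1} = ‖A_n‖ ‖A_n^{-1}‖^{-1}, and assume A_n commutes with A_{n-k} and with A_{n-k-ℓ} (ℓ the smallest positive integer with A_{n-k-ℓ} ≠ 0). Define Q(z) = (A_n z^{2k} − A_{n-k} z^k + A_{n-k}^2 A_n^{-1}) P(z). Then ρ[Q] ≤ ρ[P]. -/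
/-- Coefficients of the multiplier `Aₙ z^{2k} - A_{n-k} z^k + A_{n-k}² Aₙ⁻¹`. -/
noncomputable def mult2 {m : ℕ} (A : ℕ → Matrix (Fin m) (Fin m) ℂ) (n k : ℕ) (i : ℕ) :
    Matrix (Fin m) (Fin m) ℂ :=
  if i = 2 * k then A n else if i = k then -A (n - k)
    else if i = 0 then A (n - k) * A (n - k) * (A n)⁻¹ else 0

/-!
Split `P = P₀ + A_{n-k} z^{n-k} + A_n z^n`, where `P₀` keeps the coefficients of degree `< n - k`
(all coefficients strictly between `n - k` and `n` vanish). Because `A_n` commutes with `A_{n-k}`,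
the multiplier `M(z) = A_n z^{2k} - A_{n-k} z^k + A_{n-k}² A_n⁻¹` makes the cross terms of degree
`n` and `n + k` cancel:
`Q = M P₀ + A_{n-k}² A_n⁻¹ A_{n-k} z^{n-k} + A_n² z^{n+2k}`.

Put `a = ‖A_n‖`, `d = ‖A_n⁻¹‖`, `c = ‖A_{n-k}‖` and let `y = ρ[P]`, so that
`∑_{j<n-k} ‖A_j‖ y^j = y^n / d - c y^{n-k}`. The norm of a Cauchy product is dominated by the
product of the norm series, hence
`∑_{j<n+2k} ‖Q_j‖ y^j ≤ (a y^{2k} + c y^k + c² d)(y^n / d - c y^{n-k}) + c³ d y^{n-k}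
  = (a / d) y^{n+2k} - c (a - 1/d) y^{n+k}`,
and `a d ≥ ‖1‖ ≥ 1`. By the norm assumption `a / d = ‖(A_n²)⁻¹‖⁻¹` is the leading coefficient of
the Cauchy polynomial of `Q`, which is therefore nonnegative at `y`. Being negative between `0`
and its positive root `ρ[Q]`, it forces `ρ[Q] ≤ y`.
-/

open Finset

theorem cauchy_root_le_of_sum_le {M : ℕ} {L x y : ℝ} {c : ℕ → ℝ} (hc : ∀ j, 0 ≤ c j)
    (hL : 0 < L) (hx : 0 < x) (hy : 0 < y)
    (hxroot : L * x ^ M = ∑ j ∈ range M, c j * x ^ j)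
    (hyle : ∑ j ∈ range M, c j * y ^ j ≤ L * y ^ M) : x ≤ y := by
  by_contra! hyx
  set r := y / x
  have hr0 : 0 < r := div_pos hy hx
  have hr1 : r < 1 := (div_lt_one hx).2 hyx
  have hyr : y = x * r := by simp only [r]; field_simp
  obtain ⟨j₀, hj₀, hpos⟩ : ∃ j ∈ range M, 0 < c j * x ^ j :=
    exists_lt_of_sum_lt (f := 0) (by rw [Pi.zero_def, sum_const_zero, ← hxroot]; positivity)
  have : L * y ^ M < ∑ j ∈ range M, c j * y ^ j := calc
    L * y ^ M = ∑ j ∈ range M, c j * x ^ j * r ^ M := by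
      rw [← sum_mul, ← hxroot, hyr, mul_pow, mul_assoc]
    _ < ∑ j ∈ range M, c j * x ^ j * r ^ j := by
      refine sum_lt_sum (fun j hj => ?_) ⟨j₀, hj₀, ?_⟩
      · exact mul_le_mul_of_nonneg_left (pow_le_pow_of_le_one hr0.le hr1.le (mem_range.1 hj).le)
          (mul_nonneg (hc j) (pow_nonneg hx.le j))
      · exact mul_lt_mul_of_pos_left (pow_lt_pow_right_of_lt_one₀ hr0 hr1 (mem_range.1 hj₀)) hpos
    _ = ∑ j ∈ range M, c j * y ^ j := by simp only [hyr, mul_pow, mul_assoc]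
  linarith

section RingSeminorm

variable {R F : Type*} [Ring R] [FunLike F R ℝ]

theorem sum_range_seminorm_single [AddGroupSeminormClass F R ℝ] (N : F) (s M : ℕ) (X : R)
    (y : ℝ) :
    ∑ i ∈ range M, N ((Pi.single s X : ℕ → R) i) * y ^ i = if s < M then N X * y ^ s else 0 := by
  simp [Pi.single_apply, apply_ite N, ite_mul]

theorem sum_range_seminorm_add_le [AddGroupSeminormClass F R ℝ] (N : F) (f g : ℕ → R) (M : ℕ)
    {y : ℝ} (hy : 0 ≤ y) :
    ∑ j ∈ range M, N ((f + g) j) * y ^ j ≤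
      ∑ j ∈ range M, N (f j) * y ^ j + ∑ j ∈ range M, N (g j) * y ^ j := by
  rw [← sum_add_distrib]
  gcongr with j
  rw [← add_mul]
  gcongr
  exact map_add_le_add N _ _

theorem sum_range_seminorm_cauchy_product_le [RingSeminormClass F R ℝ] (N : F) (T B : ℕ → R)
    (M : ℕ) {y : ℝ} (hy : 0 ≤ y) :
    ∑ j ∈ range M, N (∑ i ∈ range (j + 1), T i * B (j - i)) * y ^ j ≤
      (∑ i ∈ range M, N (T i) * y ^ i) * ∑ t ∈ range M, N (B t) * y ^ t := by
  calc ∑ j ∈ range M, N (∑ i ∈ range (j + 1), T i * B (j - i)) * y ^ j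
      ≤ ∑ j ∈ range M, ∑ i ∈ range (j + 1), N (T i) * y ^ i * (N (B (j - i)) * y ^ (j - i)) := by
        gcongr with j hj
        calc N (∑ i ∈ range (j + 1), T i * B (j - i)) * y ^ j
            ≤ (∑ i ∈ range (j + 1), N (T i) * N (B (j - i))) * y ^ j := by
              gcongr
              exact (le_sum_of_subadditive N (map_zero N).le (map_add_le_add N) _ _).trans
                (sum_le_sum fun i _ => map_mul_le_mul N _ _)
          _ = _ := by
              rw [sum_mul]
              refine sum_congr rfl fun i hi => ?_
              rw [← pow_mul_pow_sub y (mem_range_succ_iff.1 hi)]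
              ring
    _ = ∑ i ∈ range M, N (T i) * y ^ i * ∑ t ∈ range (M - i), N (B t) * y ^ t := by
        simp only [range_eq_Ico]
        rw [← sum_Ico_Ico_comm]
        refine sum_congr rfl fun i _ => ?_
        rw [sum_Ico_eq_sum_range, mul_sum, ← range_eq_Ico]
        simp only [Nat.add_sub_cancel_left]
    _ ≤ (∑ i ∈ range M, N (T i) * y ^ i) * ∑ t ∈ range M, N (B t) * y ^ t := by
        rw [sum_mul]
        refine sum_le_sum fun i _ => mul_le_mul_of_nonneg_left ?_ (by positivity)
        exact sum_le_sum_of_subset_of_nonneg (range_subset_range.2 (Nat.sub_le M i))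
          fun _ _ _ => by positivity

theorem sum_range_seminorm_ite_lt [AddGroupSeminormClass F R ℝ] (N : F) (A : ℕ → R) {s M : ℕ}
    (hsM : s ≤ M) (y : ℝ) :
    ∑ t ∈ range M, N (if t < s then A t else 0) * y ^ t = ∑ t ∈ range s, N (A t) * y ^ t := by
  simp only [apply_ite N, map_zero, ite_mul, zero_mul]
  rw [← sum_filter]
  congr 1
  ext t
  simp only [mem_filter, mem_range]
  omega

theorem sum_range_seminorm_eq_add_of_gap [AddGroupSeminormClass F R ℝ] (N : F) (A : ℕ → R)
    {n k : ℕ} (hk : 0 < k) (hkn : k ≤ n) (hkmin : ∀ j, 0 < j → j < k → A (n - j) = 0) (y : ℝ) :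
    ∑ t ∈ range n, N (A t) * y ^ t
      = ∑ t ∈ range (n - k), N (A t) * y ^ t + N (A (n - k)) * y ^ (n - k) := by
  conv_lhs => rw [← Nat.sub_add_cancel hkn, sum_range_add]
  rw [sum_eq_single_of_mem 0 (mem_range.2 hk), add_zero]
  intro i hi hi0
  rw [show n - k + i = n - (k - i) by grind, hkmin _ (by grind) (by omega), map_zero, zero_mul]

theorem one_le_map_mul_map_of_mul_eq_one [RingNormClass F R ℝ] [Nontrivial R] (N : F) {u v : R}
    (huv : u * v = 1) : 1 ≤ N u * N v := by
  have h1 : 0 < N 1 := map_pos_of_ne_zero N one_ne_zero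
  have h2 : N 1 ≤ N 1 * N 1 := by simpa using map_mul_le_mul N (1 : R) 1
  calc 1 ≤ N 1 := by nlinarith
    _ ≤ N u * N v := huv ▸ map_mul_le_mul N u v

end RingSeminorm

theorem eq_lower_add_single_add_single {M : Type*} [AddZeroClass M] (A : ℕ → M) {n k : ℕ}
    (hk : 0 < k) (hkn : k ≤ n) (hdeg : ∀ j, n < j → A j = 0)
    (hkmin : ∀ j, 0 < j → j < k → A (n - j) = 0) :
    A = (fun t => if t < n - k then A t else 0)
      + (Pi.single (n - k) (A (n - k)) + Pi.single n (A n)) := by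
  ext t
  by_cases hlow : t < n - k
  · simp [hlow, show t ≠ n - k by omega, show t ≠ n by omega]
  by_cases hmid : t = n - k
  · simp [hmid, show n - k ≠ n by omega]
  by_cases htop : t = n
  · simp [htop, show n ≠ n - k by omega, show ¬n < n - k by omega]
  simp only [hlow, hmid, htop, Pi.add_apply, Pi.single_apply, if_false, add_zero]
  rcases lt_or_gt_of_ne htop with h | h
  · simpa [Nat.sub_sub_self h.le] using hkmin (n - t) (by omega) (by omega)
  · exact hdeg t h

section Qcoeff

variable {m : ℕ}

theorem Qcoeff_add_left (T T' B : ℕ → Matrix (Fin m) (Fin m) ℂ) :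
    Qcoeff (T + T') B = Qcoeff T B + Qcoeff T' B := by
  ext1 j
  simp [Qcoeff, add_mul, sum_add_distrib]

theorem Qcoeff_add_right (T B B' : ℕ → Matrix (Fin m) (Fin m) ℂ) :
    Qcoeff T (B + B') = Qcoeff T B + Qcoeff T B' := by
  ext1 j
  simp [Qcoeff, mul_add, sum_add_distrib]

theorem Qcoeff_single_left (s : ℕ) (X : Matrix (Fin m) (Fin m) ℂ)
    (B : ℕ → Matrix (Fin m) (Fin m) ℂ) (j : ℕ) :
    Qcoeff (Pi.single s X) B j = if s ≤ j then X * B (j - s) else 0 := by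
  simp [Qcoeff, Pi.single_apply, ite_mul]

theorem Qcoeff_single_single (s t : ℕ) (X Y : Matrix (Fin m) (Fin m) ℂ) :
    Qcoeff (Pi.single s X) (Pi.single t Y) = Pi.single (s + t) (X * Y) := by
  ext1 j
  rw [Qcoeff_single_left]
  simp only [Pi.single_apply]
  split_ifs <;> first | omega | simp

theorem mult2_eq_single_add (A : ℕ → Matrix (Fin m) (Fin m) ℂ) {n k : ℕ} (hk : 0 < k) :
    mult2 A n k = Pi.single (2 * k) (A n) + Pi.single k (-A (n - k))
      + Pi.single 0 (A (n - k) * A (n - k) * (A n)⁻¹) := by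
  ext1 i
  simp only [mult2, Pi.add_apply, Pi.single_apply]
  split_ifs <;> first | omega | simp

theorem Qcoeff_mult2_top (A : ℕ → Matrix (Fin m) (Fin m) ℂ) {n k : ℕ} (hk : 0 < k) (hkn : k ≤ n)
    (hinv : IsUnit (A n)) (hcomm : A n * A (n - k) = A (n - k) * A n) :
    Qcoeff (mult2 A n k) (Pi.single (n - k) (A (n - k)) + Pi.single n (A n)) =
      Pi.single (n - k) (A (n - k) * A (n - k) * (A n)⁻¹ * A (n - k))
        + Pi.single (n + 2 * k) (A n * A n) := by
  have hcancel : A (n - k) * A (n - k) * (A n)⁻¹ * A n = A (n - k) * A (n - k) := by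
    rw [mul_assoc _ (A n)⁻¹, Matrix.nonsing_inv_mul _ ((Matrix.isUnit_iff_isUnit_det _).1 hinv),
      mul_one]
  rw [mult2_eq_single_add A hk]
  simp only [Qcoeff_add_left, Qcoeff_add_right, Qcoeff_single_single, hcancel, hcomm]
  rw [show 2 * k + (n - k) = n + k by omega, show k + (n - k) = n by omega, zero_add, zero_add,
    show 2 * k + n = n + 2 * k by omega, show k + n = n + k by omega]
  simp only [neg_mul, Pi.single_neg]
  abel

end Qcoeff

section QcoeffBounds

variable {m : ℕ} {F : Type*} [FunLike F (Matrix (Fin m) (Fin m) ℂ) ℝ]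

theorem sum_range_seminorm_mult2_le [AddGroupSeminormClass F (Matrix (Fin m) (Fin m) ℂ) ℝ]
    (N : F) (A : ℕ → Matrix (Fin m) (Fin m) ℂ) {n k M : ℕ} (hk : 0 < k) (hkM : 2 * k < M)
    {y : ℝ} (hy : 0 ≤ y) :
    ∑ i ∈ range M, N (mult2 A n k i) * y ^ i
      ≤ N (A n) * y ^ (2 * k) + N (A (n - k)) * y ^ k
        + N (A (n - k) * A (n - k) * (A n)⁻¹) := by
  rw [mult2_eq_single_add A hk]
  grw [sum_range_seminorm_add_le N _ _ _ hy, sum_range_seminorm_add_le N _ _ _ hy]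
  simp only [sum_range_seminorm_single, map_neg_eq_map]
  rw [if_pos hkM, if_pos (by omega), if_pos (by omega), pow_zero, mul_one]

theorem sum_range_seminorm_Qcoeff_mult2_le_mul
    [RingSeminormClass F (Matrix (Fin m) (Fin m) ℂ) ℝ] (N : F)
    (A : ℕ → Matrix (Fin m) (Fin m) ℂ) {n k : ℕ} (hk : 0 < k) (hkn : k ≤ n)
    (hdeg : ∀ j, n < j → A j = 0) (hinv : IsUnit (A n))
    (hkmin : ∀ j, 0 < j → j < k → A (n - j) = 0) (hcomm : A n * A (n - k) = A (n - k) * A n)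
    {y : ℝ} (hy : 0 ≤ y) :
    ∑ j ∈ range (n + 2 * k), N (Qcoeff (mult2 A n k) A j) * y ^ j
      ≤ (∑ i ∈ range (n + 2 * k), N (mult2 A n k i) * y ^ i)
          * ∑ t ∈ range (n - k), N (A t) * y ^ t
        + N (A (n - k) * A (n - k) * (A n)⁻¹ * A (n - k)) * y ^ (n - k) := by
  have hQ := congrArg (Qcoeff (mult2 A n k)) (eq_lower_add_single_add_single A hk hkn hdeg hkmin)
  rw [Qcoeff_add_right, Qcoeff_mult2_top A hk hkn hinv hcomm] at hQ
  have hcauchy : ∑ j ∈ range (n + 2 * k),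
        N (Qcoeff (mult2 A n k) (fun t => if t < n - k then A t else 0) j) * y ^ j
      ≤ (∑ i ∈ range (n + 2 * k), N (mult2 A n k i) * y ^ i)
          * ∑ t ∈ range (n - k), N (A t) * y ^ t := by
    rw [← sum_range_seminorm_ite_lt N A (show n - k ≤ n + 2 * k by omega)]
    exact sum_range_seminorm_cauchy_product_le N (mult2 A n k)
      (fun t => if t < n - k then A t else 0) _ hy
  rw [hQ]
  grw [sum_range_seminorm_add_le N _ _ _ hy, sum_range_seminorm_add_le N _ _ _ hy, hcauchy]
  simp only [sum_range_seminorm_single, if_pos (show n - k < n + 2 * k by omega), lt_irrefl,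
    if_false, add_zero, le_refl]

theorem sum_range_ringNorm_Qcoeff_mult2_le [RingNormClass F (Matrix (Fin m) (Fin m) ℂ) ℝ]
    [Nontrivial (Matrix (Fin m) (Fin m) ℂ)] (N : F) (A : ℕ → Matrix (Fin m) (Fin m) ℂ) {n k : ℕ} (hk : 0 < k) (hkn : k ≤ n)
    (hdeg : ∀ j, n < j → A j = 0) (hinv : IsUnit (A n))
    (hkmin : ∀ j, 0 < j → j < k → A (n - j) = 0) (hcomm : A n * A (n - k) = A (n - k) * A n)
    {y : ℝ} (hy : 0 < y) (hyroot : (N (A n)⁻¹)⁻¹ * y ^ n = ∑ j ∈ range n, N (A j) * y ^ j) :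
    ∑ j ∈ range (n + 2 * k), N (Qcoeff (mult2 A n k) A j) * y ^ j
      ≤ N (A n) * (N (A n)⁻¹)⁻¹ * y ^ (n + 2 * k) := by
  set a := N (A n)
  set d := N (A n)⁻¹
  set c := N (A (n - k))
  have had : 1 ≤ a * d := one_le_map_mul_map_of_mul_eq_one N
    (Matrix.mul_nonsing_inv _ ((Matrix.isUnit_iff_isUnit_det _).1 hinv))
  have hd : 0 < d := map_pos_of_ne_zero N (Matrix.isUnit_nonsing_inv_iff.2 hinv).ne_zero
  have hC : N (A (n - k) * A (n - k) * (A n)⁻¹) ≤ c ^ 2 * d := calc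
    _ ≤ N (A (n - k) * A (n - k)) * d := map_mul_le_mul N _ _
    _ ≤ c * c * d := by gcongr; exact map_mul_le_mul N _ _
    _ = c ^ 2 * d := by ring
  have hCA : N (A (n - k) * A (n - k) * (A n)⁻¹ * A (n - k)) ≤ c ^ 2 * d * c :=
    (map_mul_le_mul N _ _).trans (by gcongr)
  have hlower : ∑ t ∈ range (n - k), N (A t) * y ^ t = d⁻¹ * y ^ n - c * y ^ (n - k) := by
    rw [hyroot, sum_range_seminorm_eq_add_of_gap N A hk hkn hkmin]
    ring
  have hlower_nonneg : 0 ≤ d⁻¹ * y ^ n - c * y ^ (n - k) :=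
    hlower ▸ sum_nonneg fun _ _ => by positivity
  have hgap : 0 ≤ a - d⁻¹ := sub_nonneg.2 ((inv_le_iff_one_le_mul₀ hd).2 had)
  have hpow_n : y ^ n = y ^ k * y ^ (n - k) := by rw [← pow_add]; congr 1; omega
  have hpow_top : y ^ (n + 2 * k) = (y ^ k) ^ 3 * y ^ (n - k) := by
    rw [← pow_mul, ← pow_add]; congr 1; omega
  calc ∑ j ∈ range (n + 2 * k), N (Qcoeff (mult2 A n k) A j) * y ^ j
      ≤ (a * y ^ (2 * k) + c * y ^ k + c ^ 2 * d) * (d⁻¹ * y ^ n - c * y ^ (n - k))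
        + c ^ 2 * d * c * y ^ (n - k) := by
        grw [sum_range_seminorm_Qcoeff_mult2_le_mul N A hk hkn hdeg hinv hkmin hcomm hy.le,
          sum_range_seminorm_mult2_le N A hk (by omega) hy.le, hlower, hC, hCA]
    _ = a * d⁻¹ * y ^ (n + 2 * k) - c * (y ^ k) ^ 2 * y ^ (n - k) * (a - d⁻¹) := by
        rw [hpow_n, hpow_top]
        linear_combination (c ^ 2 * y ^ k * y ^ (n - k)) * mul_inv_cancel₀ hd.ne'
    _ ≤ a * d⁻¹ * y ^ (n + 2 * k) := sub_le_self _ (by positivity)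

end QcoeffBounds

theorem matrix_improved_cauchy_radius_Q2_general {m : ℕ}
    (n : ℕ) (A : ℕ → Matrix (Fin m) (Fin m) ℂ)
    (hdeg : ∀ j, n < j → A j = 0) (hinv : IsUnit (A n))
    (k ℓ : ℕ) (hk : 0 < k) (hkl : k + ℓ ≤ n)
    (hknz : A (n - k) ≠ 0) (hkmin : ∀ j, 0 < j → j < k → A (n - j) = 0)
    (N : Matrix (Fin m) (Fin m) ℂ → ℝ)
    (hN0 : ∀ M, N M = 0 ↔ M = 0)
    (hNsmul : ∀ (c : ℂ) M, N (c • M) = ‖c‖ * N M)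
    (hNadd : ∀ M₁ M₂, N (M₁ + M₂) ≤ N M₁ + N M₂)
    (hNmul : ∀ M₁ M₂, N (M₁ * M₂) ≤ N M₁ * N M₂)
    (hNsq : (N ((A n)⁻¹ * (A n)⁻¹))⁻¹ = N (A n) * (N (A n)⁻¹)⁻¹)
    (hcomm1 : A n * A (n - k) = A (n - k) * A n)
    (x y : ℝ) (hx : 0 < x) (hy : 0 < y)
    (hxroot : (N ((A n * A n))⁻¹)⁻¹ * x ^ (n + 2 * k)
      = ∑ j ∈ Finset.range (n + 2 * k), N (Qcoeff (mult2 A n k) A j) * x ^ j)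
    (hyroot : (N (A n)⁻¹)⁻¹ * y ^ n = ∑ j ∈ Finset.range n, N (A j) * y ^ j) :
    x ≤ y := by
  let ν : RingNorm (Matrix (Fin m) (Fin m) ℂ) :=
    { toFun := N
      map_zero' := (hN0 0).2 rfl
      add_le' := hNadd
      neg' := fun M => by simpa using hNsmul (-1) M
      mul_le' := hNmul
      eq_zero_of_map_eq_zero' := fun M => (hN0 M).1 }
  have : Nontrivial (Matrix (Fin m) (Fin m) ℂ) := ⟨⟨_, _, hknz⟩⟩
  have hlead : (N (A n * A n)⁻¹)⁻¹ = N (A n) * (N (A n)⁻¹)⁻¹ := by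
    rw [Matrix.mul_inv_rev, hNsq]
  have hlead_pos : 0 < N (A n) * (N (A n)⁻¹)⁻¹ :=
    mul_pos (map_pos_of_ne_zero ν hinv.ne_zero)
      (inv_pos.2 (map_pos_of_ne_zero ν (Matrix.isUnit_nonsing_inv_iff.2 hinv).ne_zero))
  exact cauchy_root_le_of_sum_le (fun j => apply_nonneg ν _) hlead_pos hx hy (hlead ▸ hxroot)
    (sum_range_ringNorm_Qcoeff_mult2_le ν A hk (by omega) hdeg hinv hkmin hcomm1 hy hyroot)

/-- `ρ[(Aₙ z^{2k} - A_{n-k} z^k + A_{n-k}² Aₙ⁻¹) P(z)] ≤ ρ[P]` under the norm and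
commutation assumptions of Theorem 2.1. -/
theorem matrix_improved_cauchy_radius_Q2 {m : ℕ}
    (n : ℕ) (A : ℕ → Matrix (Fin m) (Fin m) ℂ)
    (hdeg : ∀ j, n < j → A j = 0) (hinv : IsUnit (A n))
    (k ℓ : ℕ) (hk : 0 < k) (hℓ : 0 < ℓ) (hkl : k + ℓ ≤ n)
    (hknz : A (n - k) ≠ 0) (hkmin : ∀ j, 0 < j → j < k → A (n - j) = 0)
    (hlnz : A (n - k - ℓ) ≠ 0) (hlmin : ∀ j, 0 < j → j < ℓ → A (n - k - j) = 0)
    (N : Matrix (Fin m) (Fin m) ℂ → ℝ)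
    (hN0 : ∀ M, N M = 0 ↔ M = 0)
    (hNsmul : ∀ (c : ℂ) M, N (c • M) = ‖c‖ * N M)
    (hNadd : ∀ M₁ M₂, N (M₁ + M₂) ≤ N M₁ + N M₂)
    (hNmul : ∀ M₁ M₂, N (M₁ * M₂) ≤ N M₁ * N M₂)
    (hNsq : (N ((A n)⁻¹ * (A n)⁻¹))⁻¹ = N (A n) * (N (A n)⁻¹)⁻¹)
    (hcomm1 : A n * A (n - k) = A (n - k) * A n)
    (hcomm2 : A n * A (n - k - ℓ) = A (n - k - ℓ) * A n)
    (x y : ℝ) (hx : 0 < x) (hy : 0 < y)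
    (hxroot : (N ((A n * A n))⁻¹)⁻¹ * x ^ (n + 2 * k)
      = ∑ j ∈ Finset.range (n + 2 * k), N (Qcoeff (mult2 A n k) A j) * x ^ j)
    (hyroot : (N (A n)⁻¹)⁻¹ * y ^ n = ∑ j ∈ Finset.range n, N (A j) * y ^ j) :
    x ≤ y :=
  matrix_improved_cauchy_radius_Q2_general n A hdeg hinv k ℓ hk hkl hknz hkmin N hN0 hNsmul hNadd
    hNmul hNsq hcomm1 x y hx hy hxroot hyroot
end

section
/- Let P(z) = Σ_{j=0}^n A_j z^j be a matrix polynomial with A_n invertible and at least three nonzero coefficients. Suppose k = ℓ, i.e., k is the smallest positive integer with A_{n-k} ≠ 0 and A_{n-2k} ≠ 0 is the next nonzero coefficient. Let ‖·‖ be a submultiplicative matrix norm with ‖A_n^{-2}‖^{-1} = ‖A_n‖‖A_n^{-1}‖^{-1}, and assume A_n commutes with A_{n-k} and A_{n-2k}. Define Q(z) = (A_n z^{2k} − A_{n-k} z^k − A_{n-2k} + A_{n-k}^2 A_n^{-1}) P(z). Then ρ[Q] ≤ ρ[P]. -/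
/-- Coefficients of the multiplier `Aₙ z^{2k} - A_{n-k} z^k - A_{n-2k} + A_{n-k}² Aₙ⁻¹`. -/
noncomputable def mult3 {m : ℕ} (A : ℕ → Matrix (Fin m) (Fin m) ℂ) (n k : ℕ) (i : ℕ) :
    Matrix (Fin m) (Fin m) ℂ :=
  if i = 2 * k then A n else if i = k then -A (n - k)
    else if i = 0 then A (n - k) * A (n - k) * (A n)⁻¹ - A (n - 2 * k) else 0

/-!
Write `c = ‖Aₙ⁻¹‖⁻¹`, `a = ‖A_{n-k}‖`, `b = ‖A_{n-2k}‖` and `T₀ = A_{n-k}² Aₙ⁻¹ - A_{n-2k}`.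
Because `Aₙ` commutes with `A_{n-k}` and `A_{n-2k}`, the coefficients of `Q` in degrees
`n, …, n + 2k - 1` cancel, and `Q_j = T₀ A_j - A_{n-k} A_{j-k} + Aₙ A_{j-2k}` for `j < n`.
At the Cauchy radius `y` of `P`, with `S p = ∑_{i<p} ‖A_i‖ yⁱ`, the gaps of `P` give
`S n = c yⁿ`, `S (n-k) = S n - a y^{n-k}` and `S (n-2k) = S (n-k) - b y^{n-2k}`, so that
`∑_{j<n} ‖Q_j‖ yʲ ≤ ‖T₀‖ S n + a yᵏ S (n-k) + ‖Aₙ‖ y^{2k} S (n-2k) ≤ ‖Aₙ‖ c y^{n+2k}`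
by `‖T₀‖ c ≤ a² + b c` and `c ≤ ‖Aₙ‖`. The norm hypothesis makes `‖Aₙ‖ c` the leading
coefficient of the Cauchy polynomial of `Q`, which is therefore nonnegative at `y`; hence its
positive root lies below `y`.
-/

open Finset

theorem le_of_mul_pow_eq_sum_of_sum_le {q : ℕ → ℝ} (hq : ∀ j, 0 ≤ q j) {D : ℕ} {L x y : ℝ}
    (hL : 0 < L) (hy : 0 < y) (hroot : L * x ^ D = ∑ j ∈ range D, q j * x ^ j)
    (hsum : ∑ j ∈ range D, q j * y ^ j ≤ L * y ^ D) : x ≤ y := by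
  rcases le_or_gt x y with hxy | hyx
  · exact hxy
  cases D with
  | zero => simp [hL.ne'] at hroot
  | succ D =>
    have hx0 : 0 < x := hy.trans hyx
    have hterm : ∀ j ∈ range (D + 1), q j * x ^ j * y ^ D ≤ x ^ D * (q j * y ^ j) := by
      intro j hj
      obtain ⟨i, rfl⟩ := Nat.exists_eq_add_of_le (Nat.lt_succ_iff.1 (mem_range.1 hj))
      have hyi := pow_le_pow_left₀ hy.le hyx.le i
      rw [pow_add, pow_add]
      have hqxy : 0 ≤ q j * x ^ j * y ^ j :=
        mul_nonneg (mul_nonneg (hq j) (pow_nonneg hx0.le j)) (pow_nonneg hy.le j)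
      nlinarith [mul_le_mul_of_nonneg_left hyi hqxy]
    have key : L * x ^ D * y ^ D * x ≤ L * x ^ D * y ^ D * y :=
      calc L * x ^ D * y ^ D * x = (∑ j ∈ range (D + 1), q j * x ^ j) * y ^ D := by
            rw [← hroot]; ring
        _ ≤ x ^ D * ∑ j ∈ range (D + 1), q j * y ^ j := by
          rw [sum_mul, mul_sum]; exact sum_le_sum hterm
        _ ≤ x ^ D * (L * y ^ (D + 1)) := by gcongr
        _ = L * x ^ D * y ^ D * y := by ring
    exact le_of_mul_le_mul_left key (by positivity)

theorem sum_range_ite_mul_pow {R : Type*} [CommSemiring R] {k n : ℕ} (hkn : k ≤ n) (f : ℕ → R)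
    (y : R) : ∑ j ∈ range n, (if k ≤ j then f (j - k) else 0) * y ^ j
      = y ^ k * ∑ i ∈ range (n - k), f i * y ^ i := by
  obtain ⟨p, rfl⟩ := Nat.exists_eq_add_of_le hkn
  rw [sum_range_add, Nat.add_sub_cancel_left, mul_sum,
    sum_eq_zero fun j hj => by rw [if_neg (by simpa using hj), zero_mul], zero_add]
  refine sum_congr rfl fun i _ => ?_
  rw [if_pos (Nat.le_add_right k i), Nat.add_sub_cancel_left, pow_add]
  ring

theorem sum_range_eq_add_of_gap {M : Type*} [AddCommMonoid M] {f : ℕ → M} {p k : ℕ}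
    (hk : 0 < k) (hkp : k ≤ p) (hgap : ∀ j, 0 < j → j < k → f (p - j) = 0) :
    ∑ i ∈ range p, f i = ∑ i ∈ range (p - k), f i + f (p - k) := by
  rw [← sum_range_succ]
  refine (sum_subset (range_subset_range.2 (by omega)) fun i hi hi' => ?_).symm
  simp only [mem_range] at hi hi'
  simpa [Nat.sub_sub_self hi.le] using hgap (p - i) (by omega) (by omega)

structure IsSubmultiplicativeNorm {m : ℕ} (N : Matrix (Fin m) (Fin m) ℂ → ℝ) : Prop where
  eq_zero_iff : ∀ M, N M = 0 ↔ M = 0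
  smul : ∀ (c : ℂ) M, N (c • M) = ‖c‖ * N M
  add_le : ∀ M₁ M₂, N (M₁ + M₂) ≤ N M₁ + N M₂
  mul_le : ∀ M₁ M₂, N (M₁ * M₂) ≤ N M₁ * N M₂

namespace IsSubmultiplicativeNorm

variable {m : ℕ} {N : Matrix (Fin m) (Fin m) ℂ → ℝ}

theorem map_zero (hN : IsSubmultiplicativeNorm N) : N 0 = 0 :=
  (hN.eq_zero_iff 0).2 rfl

theorem map_neg (hN : IsSubmultiplicativeNorm N) (M : Matrix (Fin m) (Fin m) ℂ) :
    N (-M) = N M := by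
  simpa using hN.smul (-1) M

theorem nonneg (hN : IsSubmultiplicativeNorm N) (M : Matrix (Fin m) (Fin m) ℂ) : 0 ≤ N M := by
  have h := hN.add_le M (-M)
  rw [add_neg_cancel, hN.map_zero, hN.map_neg] at h
  linarith

theorem pos (hN : IsSubmultiplicativeNorm N) {M : Matrix (Fin m) (Fin m) ℂ} (hM : M ≠ 0) :
    0 < N M :=
  (hN.nonneg M).lt_of_ne' fun h => hM ((hN.eq_zero_iff M).1 h)

theorem inv_norm_inv_le (hN : IsSubmultiplicativeNorm N) {M : Matrix (Fin m) (Fin m) ℂ}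
    (hM : IsUnit M) : (N M⁻¹)⁻¹ ≤ N M := by
  rcases (hN.nonneg M⁻¹).eq_or_lt with h | h
  · rw [← h, inv_zero]
    exact hN.nonneg M
  have hone : (1 : Matrix (Fin m) (Fin m) ℂ) ≠ 0 := fun h1 => by
    rw [← Matrix.mul_one M⁻¹, h1, Matrix.mul_zero, hN.map_zero] at h
    exact h.false
  have hN1 : 1 ≤ N 1 := by
    have := hN.mul_le 1 1
    rw [Matrix.mul_one] at this
    exact (le_mul_iff_one_le_left (hN.pos hone)).1 this
  rw [inv_le_iff_one_le_mul₀ h]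
  calc 1 ≤ N 1 := hN1
    _ = N (M * M⁻¹) := by rw [Matrix.mul_nonsing_inv _ ((Matrix.isUnit_iff_isUnit_det _).1 hM)]
    _ ≤ N M * N M⁻¹ := hN.mul_le _ _

theorem inv_norm_inv_pos (hN : IsSubmultiplicativeNorm N) [Nontrivial (Matrix (Fin m) (Fin m) ℂ)]
    {M : Matrix (Fin m) (Fin m) ℂ} (hM : IsUnit M) : 0 < (N M⁻¹)⁻¹ :=
  inv_pos.2 (hN.pos (Matrix.isUnit_nonsing_inv_iff.2 hM).ne_zero)

end IsSubmultiplicativeNorm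

section MatrixPolynomial

variable {m : ℕ}

theorem Qcoeff_eq_of_support {T : ℕ → Matrix (Fin m) (Fin m) ℂ} {k : ℕ} (hk : 0 < k)
    (hT : ∀ i, i ≠ 0 → i ≠ k → i ≠ 2 * k → T i = 0) (A : ℕ → Matrix (Fin m) (Fin m) ℂ) (j : ℕ) :
    Qcoeff T A j = T 0 * A j + (if k ≤ j then T k * A (j - k) else 0)
      + (if 2 * k ≤ j then T (2 * k) * A (j - 2 * k) else 0) := by
  have hterm : ∀ i, T i * A (j - i) = (if i = 0 then T 0 * A j else 0)
      + (if i = k then T k * A (j - k) else 0)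
      + (if i = 2 * k then T (2 * k) * A (j - 2 * k) else 0) := by
    intro i
    by_cases h0 : i = 0
    · subst h0; rw [if_pos rfl, if_neg hk.ne, if_neg (by omega)]; simp
    by_cases h1 : i = k
    · subst h1; rw [if_neg h0, if_pos rfl, if_neg (by omega)]; simp
    by_cases h2 : i = 2 * k
    · subst h2; rw [if_neg h0, if_neg h1, if_pos rfl]; simp
    · rw [if_neg h0, if_neg h1, if_neg h2, hT i h0 h1 h2]; simp
  rw [Qcoeff, sum_congr rfl fun i _ => hterm i]
  simp only [sum_add_distrib, sum_ite_eq', mem_range, Nat.lt_succ_iff, Nat.zero_le, if_true]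

theorem mult3_eq_zero (A : ℕ → Matrix (Fin m) (Fin m) ℂ) (n k : ℕ) {i : ℕ} (h0 : i ≠ 0) (h1 : i ≠ k)
    (h2 : i ≠ 2 * k) : mult3 A n k i = 0 := by
  rw [mult3, if_neg h2, if_neg h1, if_neg h0]

theorem mult3_zero (A : ℕ → Matrix (Fin m) (Fin m) ℂ) (n : ℕ) {k : ℕ} (hk : 0 < k) :
    mult3 A n k 0 = A (n - k) * A (n - k) * (A n)⁻¹ - A (n - 2 * k) := by
  rw [mult3, if_neg (by omega), if_neg (by omega), if_pos rfl]

theorem mult3_self (A : ℕ → Matrix (Fin m) (Fin m) ℂ) (n : ℕ) {k : ℕ} (hk : 0 < k) :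
    mult3 A n k k = -A (n - k) := by
  rw [mult3, if_neg (by omega), if_pos rfl]

theorem mult3_two_mul (A : ℕ → Matrix (Fin m) (Fin m) ℂ) (n k : ℕ) :
    mult3 A n k (2 * k) = A n := by
  rw [mult3, if_pos rfl]

theorem Qcoeff_mult3 (A : ℕ → Matrix (Fin m) (Fin m) ℂ) (n : ℕ) {k : ℕ} (hk : 0 < k) (j : ℕ) :
    Qcoeff (mult3 A n k) A j = (A (n - k) * A (n - k) * (A n)⁻¹ - A (n - 2 * k)) * A j
      - (if k ≤ j then A (n - k) * A (j - k) else 0)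
      + (if 2 * k ≤ j then A n * A (j - 2 * k) else 0) := by
  rw [Qcoeff_eq_of_support hk (fun i => mult3_eq_zero A n k) A j, mult3_zero A n hk,
    mult3_self A n hk, mult3_two_mul]
  split_ifs <;> simp [sub_eq_add_neg]

theorem Qcoeff_mult3_eq_zero {n k : ℕ} {A : ℕ → Matrix (Fin m) (Fin m) ℂ}
    (hdeg : ∀ j, n < j → A j = 0) (hinv : IsUnit (A n)) (hk : 0 < k) (hkl : 2 * k ≤ n)
    (hkmin : ∀ j, 0 < j → j < k → A (n - j) = 0) (hlmin : ∀ j, 0 < j → j < k → A (n - k - j) = 0)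
    (hcomm1 : A n * A (n - k) = A (n - k) * A n)
    (hcomm2 : A n * A (n - 2 * k) = A (n - 2 * k) * A n)
    {j : ℕ} (hnj : n ≤ j) (hjn : j < n + 2 * k) : Qcoeff (mult3 A n k) A j = 0 := by
  rw [Qcoeff_mult3 A n hk, if_pos (by omega), if_pos (by omega)]
  obtain ⟨d, rfl⟩ := Nat.exists_eq_add_of_le hnj
  rcases Nat.eq_zero_or_pos d with rfl | hd
  · have hAn : (A n)⁻¹ * A n = 1 :=
      Matrix.nonsing_inv_mul _ ((Matrix.isUnit_iff_isUnit_det _).1 hinv)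
    rw [add_zero, sub_mul, Matrix.mul_assoc, hAn, Matrix.mul_one, ← hcomm2]
    abel
  rw [hdeg (n + d) (by omega), Matrix.mul_zero, zero_sub]
  rcases lt_trichotomy d k with hdk | rfl | hdk
  · rw [show n + d - k = n - (k - d) by omega, show n + d - 2 * k = n - k - (k - d) by omega,
      hkmin (k - d) (by omega) (by omega), hlmin (k - d) (by omega) (by omega)]
    simp
  · rw [show n + d - d = n by omega, show n + d - 2 * d = n - d by omega, hcomm1]
    abel
  · rw [hdeg (n + d - k) (by omega), show n + d - 2 * k = n - (2 * k - d) by omega,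
      hkmin (2 * k - d) (by omega) (by omega)]
    simp

end MatrixPolynomial

section NormEstimate

variable {m : ℕ} {N : Matrix (Fin m) (Fin m) ℂ → ℝ}

theorem norm_Qcoeff_le_of_support (hN : IsSubmultiplicativeNorm N)
    {T : ℕ → Matrix (Fin m) (Fin m) ℂ} {k : ℕ} (hk : 0 < k)
    (hT : ∀ i, i ≠ 0 → i ≠ k → i ≠ 2 * k → T i = 0) (A : ℕ → Matrix (Fin m) (Fin m) ℂ) (j : ℕ) :
    N (Qcoeff T A j) ≤ N (T 0) * N (A j) + N (T k) * (if k ≤ j then N (A (j - k)) else 0)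
      + N (T (2 * k)) * (if 2 * k ≤ j then N (A (j - 2 * k)) else 0) := by
  rw [Qcoeff_eq_of_support hk hT]
  refine (hN.add_le _ _).trans (add_le_add ((hN.add_le _ _).trans
    (add_le_add (hN.mul_le _ _) ?_)) ?_) <;>
    split_ifs <;> simp only [hN.map_zero, hN.mul_le, mul_zero, le_refl]

theorem sum_norm_Qcoeff_le_of_support (hN : IsSubmultiplicativeNorm N)
    {T : ℕ → Matrix (Fin m) (Fin m) ℂ} {k n : ℕ} (hk : 0 < k) (hkn : 2 * k ≤ n)
    (hT : ∀ i, i ≠ 0 → i ≠ k → i ≠ 2 * k → T i = 0) (A : ℕ → Matrix (Fin m) (Fin m) ℂ)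
    {y : ℝ} (hy : 0 ≤ y) :
    ∑ j ∈ range n, N (Qcoeff T A j) * y ^ j
      ≤ N (T 0) * ∑ i ∈ range n, N (A i) * y ^ i
        + N (T k) * (y ^ k * ∑ i ∈ range (n - k), N (A i) * y ^ i)
        + N (T (2 * k)) * (y ^ (2 * k) * ∑ i ∈ range (n - 2 * k), N (A i) * y ^ i) := by
  rw [← sum_range_ite_mul_pow (by omega), ← sum_range_ite_mul_pow hkn, mul_sum, mul_sum, mul_sum,
    ← sum_add_distrib, ← sum_add_distrib]
  refine sum_le_sum fun j _ => ?_
  have := mul_le_mul_of_nonneg_right (norm_Qcoeff_le_of_support hN hk hT A j) (pow_nonneg hy j)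
  linarith

end NormEstimate

theorem sum_norm_Qcoeff_mult3_le {m n k : ℕ} {N : Matrix (Fin m) (Fin m) ℂ → ℝ}
    (hN : IsSubmultiplicativeNorm N) {A : ℕ → Matrix (Fin m) (Fin m) ℂ}
    (hdeg : ∀ j, n < j → A j = 0) (hinv : IsUnit (A n)) (hk : 0 < k) (hkl : 2 * k ≤ n)
    (hkmin : ∀ j, 0 < j → j < k → A (n - j) = 0) (hlmin : ∀ j, 0 < j → j < k → A (n - k - j) = 0)
    (hcomm1 : A n * A (n - k) = A (n - k) * A n)
    (hcomm2 : A n * A (n - 2 * k) = A (n - 2 * k) * A n) {y : ℝ} (hy : 0 ≤ y)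
    (hyroot : (N (A n)⁻¹)⁻¹ * y ^ n = ∑ j ∈ range n, N (A j) * y ^ j) :
    ∑ j ∈ range (n + 2 * k), N (Qcoeff (mult3 A n k) A j) * y ^ j
      ≤ N (A n) * (N (A n)⁻¹)⁻¹ * y ^ (n + 2 * k) := by
  set a := N (A (n - k))
  set b := N (A (n - 2 * k))
  set c := (N (A n)⁻¹)⁻¹
  set S : ℕ → ℝ := fun p => ∑ i ∈ range p, N (A i) * y ^ i
  have hQ : ∑ j ∈ range (n + 2 * k), N (Qcoeff (mult3 A n k) A j) * y ^ j
      = ∑ j ∈ range n, N (Qcoeff (mult3 A n k) A j) * y ^ j := by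
    refine (sum_subset (range_subset_range.2 (by omega)) fun j hj hj' => ?_).symm
    simp only [mem_range, not_lt] at hj hj'
    rw [Qcoeff_mult3_eq_zero hdeg hinv hk hkl hkmin hlmin hcomm1 hcomm2 hj' hj, hN.map_zero,
      zero_mul]
  have hSn : S n = S (n - k) + a * y ^ (n - k) :=
    sum_range_eq_add_of_gap hk (by omega) fun j hj hjk => by
      rw [hkmin j hj hjk, hN.map_zero, zero_mul]
  have hSnk : S (n - k) = S (n - 2 * k) + b * y ^ (n - 2 * k) := by
    have := sum_range_eq_add_of_gap (f := fun i => N (A i) * y ^ i) (p := n - k) hk (by omega)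
      fun j hj hjk => by rw [hlmin j hj hjk, hN.map_zero, zero_mul]
    rwa [show n - k - k = n - 2 * k by omega] at this
  have hc : c ≤ N (A n) := hN.inv_norm_inv_le hinv
  have hT0 : N (mult3 A n k 0) * c ≤ a * a + b * N (A n) := by
    have hcc : N (A n)⁻¹ * c ≤ 1 := mul_inv_le_one
    have hc0 : 0 ≤ c := inv_nonneg.2 (hN.nonneg _)
    have hNT0 : N (mult3 A n k 0) ≤ a * a * N (A n)⁻¹ + b := by
      rw [mult3_zero A n hk, sub_eq_add_neg]
      refine (hN.add_le _ _).trans (add_le_add ?_ (hN.map_neg _).le)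
      exact (hN.mul_le _ _).trans (mul_le_mul_of_nonneg_right (hN.mul_le _ _) (hN.nonneg _))
    nlinarith [hN.nonneg (A (n - k)), hN.nonneg (A (n - 2 * k))]
  have hbound := sum_norm_Qcoeff_le_of_support hN hk hkl (fun i => mult3_eq_zero A n k) A hy
  rw [mult3_self A n hk, mult3_two_mul, hN.map_neg] at hbound
  change _ ≤ N (mult3 A n k 0) * S n + a * (y ^ k * S (n - k))
    + N (A n) * (y ^ (2 * k) * S (n - 2 * k)) at hbound
  have hpow : ∀ p i j, i + k * j = p → y ^ p = y ^ i * (y ^ k) ^ j := fun p i j h => by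
    rw [← pow_mul, ← pow_add, h]
  change c * y ^ n = S n at hyroot
  rw [hpow n (n - 2 * k) 2 (by omega)] at hyroot
  rw [hpow (n - k) (n - 2 * k) 1 (by omega)] at hSn
  rw [hpow (2 * k) 0 2 (by omega)] at hbound
  rw [hQ, hpow (n + 2 * k) (n - 2 * k) 4 (by omega)]
  -- after eliminating `S n`, `S (n - k)` and `S (n - 2k)`, the slack is exactly `hX + hY`
  have hX : 0 ≤ y ^ (n - 2 * k) * (y ^ k) ^ 2 * (a * a + b * N (A n) - N (mult3 A n k 0) * c) := by
    have := sub_nonneg.2 hT0; positivity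
  have hY : 0 ≤ a * y ^ (n - 2 * k) * (y ^ k) ^ 3 * (N (A n) - c) := by
    have := sub_nonneg.2 hc; have := hN.nonneg (A (n - k)); positivity
  linear_combination hbound + hX + hY
    - (N (mult3 A n k 0) + a * y ^ k + N (A n) * (y ^ k) ^ 2) * hyroot
    - (a * y ^ k + N (A n) * (y ^ k) ^ 2) * hSn - N (A n) * (y ^ k) ^ 2 * hSnk

theorem matrix_improved_cauchy_radius_Q3_general {m : ℕ}
    (n : ℕ) (A : ℕ → Matrix (Fin m) (Fin m) ℂ)
    (hdeg : ∀ j, n < j → A j = 0) (hinv : IsUnit (A n))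
    (k : ℕ) (hk : 0 < k) (hkl : 2 * k ≤ n)
    (hknz : A (n - k) ≠ 0) (hkmin : ∀ j, 0 < j → j < k → A (n - j) = 0)
    (hlmin : ∀ j, 0 < j → j < k → A (n - k - j) = 0)
    (N : Matrix (Fin m) (Fin m) ℂ → ℝ)
    (hN0 : ∀ M, N M = 0 ↔ M = 0)
    (hNsmul : ∀ (c : ℂ) M, N (c • M) = ‖c‖ * N M)
    (hNadd : ∀ M₁ M₂, N (M₁ + M₂) ≤ N M₁ + N M₂)
    (hNmul : ∀ M₁ M₂, N (M₁ * M₂) ≤ N M₁ * N M₂)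
    (hNsq : (N ((A n)⁻¹ * (A n)⁻¹))⁻¹ = N (A n) * (N (A n)⁻¹)⁻¹)
    (hcomm1 : A n * A (n - k) = A (n - k) * A n)
    (hcomm2 : A n * A (n - 2 * k) = A (n - 2 * k) * A n)
    (x y : ℝ) (hy : 0 < y)
    (hxroot : (N ((A n * A n))⁻¹)⁻¹ * x ^ (n + 2 * k)
      = ∑ j ∈ Finset.range (n + 2 * k), N (Qcoeff (mult3 A n k) A j) * x ^ j)
    (hyroot : (N (A n)⁻¹)⁻¹ * y ^ n = ∑ j ∈ Finset.range n, N (A j) * y ^ j) :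
    x ≤ y := by
  have hN : IsSubmultiplicativeNorm N := ⟨hN0, hNsmul, hNadd, hNmul⟩
  have : Nontrivial (Matrix (Fin m) (Fin m) ℂ) := nontrivial_of_ne _ _ hknz
  have hlead : (N (A n * A n)⁻¹)⁻¹ = N (A n) * (N (A n)⁻¹)⁻¹ := by
    rw [Matrix.mul_inv_rev, hNsq]
  have hc_pos := hN.inv_norm_inv_pos hinv
  refine le_of_mul_pow_eq_sum_of_sum_le (fun j => hN.nonneg _) ?_ hy hxroot ?_ <;> rw [hlead]
  · exact mul_pos (hc_pos.trans_le (hN.inv_norm_inv_le hinv)) hc_pos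
  · exact sum_norm_Qcoeff_mult3_le hN hdeg hinv hk hkl hkmin hlmin hcomm1 hcomm2 hy.le hyroot

/-- Case `ℓ = k`:
`ρ[(Aₙ z^{2k} - A_{n-k} z^k - A_{n-2k} + A_{n-k}² Aₙ⁻¹) P(z)] ≤ ρ[P]` under the norm and
commutation assumptions of Theorem 2.1. -/
theorem matrix_improved_cauchy_radius_Q3 {m : ℕ}
    (n : ℕ) (A : ℕ → Matrix (Fin m) (Fin m) ℂ)
    (hdeg : ∀ j, n < j → A j = 0) (hinv : IsUnit (A n))
    (k : ℕ) (hk : 0 < k) (hkl : 2 * k ≤ n)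
    (hknz : A (n - k) ≠ 0) (hkmin : ∀ j, 0 < j → j < k → A (n - j) = 0)
    (hlnz : A (n - 2 * k) ≠ 0) (hlmin : ∀ j, 0 < j → j < k → A (n - k - j) = 0)
    (N : Matrix (Fin m) (Fin m) ℂ → ℝ)
    (hN0 : ∀ M, N M = 0 ↔ M = 0)
    (hNsmul : ∀ (c : ℂ) M, N (c • M) = ‖c‖ * N M)
    (hNadd : ∀ M₁ M₂, N (M₁ + M₂) ≤ N M₁ + N M₂)
    (hNmul : ∀ M₁ M₂, N (M₁ * M₂) ≤ N M₁ * N M₂)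
    (hNsq : (N ((A n)⁻¹ * (A n)⁻¹))⁻¹ = N (A n) * (N (A n)⁻¹)⁻¹)
    (hcomm1 : A n * A (n - k) = A (n - k) * A n)
    (hcomm2 : A n * A (n - 2 * k) = A (n - 2 * k) * A n)
    (x y : ℝ) (hx : 0 < x) (hy : 0 < y)
    (hxroot : (N ((A n * A n))⁻¹)⁻¹ * x ^ (n + 2 * k)
      = ∑ j ∈ Finset.range (n + 2 * k), N (Qcoeff (mult3 A n k) A j) * x ^ j)
    (hyroot : (N (A n)⁻¹)⁻¹ * y ^ n = ∑ j ∈ Finset.range n, N (A j) * y ^ j) :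
    x ≤ y :=
  matrix_improved_cauchy_radius_Q3_general n A hdeg hinv k hk hkl hknz hkmin hlmin N hN0 hNsmul
    hNadd hNmul hNsq hcomm1 hcomm2 x y hy hxroot hyroot
end

section
/- Let p(z) = Σ_{j=0}^n a_j z^j with a_n ≠ 0 and at least two other nonzero coefficients, and let k, ℓ be the smallest positive integers with a_{n-k} ≠ 0 and a_{n-k-ℓ} ≠ 0. If ℓ > k, then in the product q_2(z) = (a_n z^{2k} − a_{n-k} z^k + a_{n-k}^2/a_n) p(z), the coefficients of z^j vanish for all j with n − min(k, ℓ−k) < j < n + 2k; i.e., q_2 has leading term a_n^2 z^{n+2k} followed by at least 2k consecutive zero coefficients. -/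
open Polynomial

/-- Case `ℓ > k`: `q₂ = (aₙ z^{2k} - a_{n-k} z^k + a_{n-k}²/aₙ) p` has leading term
`aₙ² z^{n+2k}` and zero coefficients for all `j` with `n - min(k, ℓ-k) < j < n + 2k`. -/
theorem q2_leading_zero_coefficients
    (p : Polynomial ℂ) (n : ℕ) (hp : p ≠ 0) (hn : p.natDegree = n)
    (k ℓ : ℕ) (hk : 0 < k) (hℓ : 0 < ℓ) (hlk : k < ℓ) (hkl : k + ℓ ≤ n)
    (hknz : p.coeff (n - k) ≠ 0)
    (hkmin : ∀ j, 0 < j → j < k → p.coeff (n - j) = 0)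
    (hlnz : p.coeff (n - k - ℓ) ≠ 0)
    (hlmin : ∀ j, 0 < j → j < ℓ → p.coeff (n - k - j) = 0) :
    ((C (p.coeff n) * X ^ (2 * k) - C (p.coeff (n - k)) * X ^ k
        + C (p.coeff (n - k) ^ 2 / p.coeff n)) * p).coeff (n + 2 * k)
      = p.coeff n ^ 2 ∧
    ∀ j, n - min k (ℓ - k) < j → j < n + 2 * k →
      ((C (p.coeff n) * X ^ (2 * k) - C (p.coeff (n - k)) * X ^ k
          + C (p.coeff (n - k) ^ 2 / p.coeff n)) * p).coeff j = 0 := by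
  set a := p.coeff n with ha
  set b := p.coeff (n - k) with hb
  set c := b ^ 2 / a with hc
  have han : a ≠ 0 := by
    rw [ha, ← hn]
    exact mt Polynomial.leadingCoeff_eq_zero.mp hp
  have hca : c * a = b ^ 2 := by
    rw [hc]; field_simp
  have hz : ∀ t, 0 < t → t < ℓ + k → t ≠ k → p.coeff (n - t) = 0 := by
    intro t ht1 ht2 ht3
    rcases lt_or_gt_of_ne ht3 with h | h
    · exact hkmin t ht1 h
    · have := hlmin (t - k) (by omega) (by omega)
      rwa [show n - k - (t - k) = n - t by omega] at this
  have htop : ∀ i, n < i → p.coeff i = 0 := by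
    intro i hi
    exact Polynomial.coeff_eq_zero_of_natDegree_lt (by omega)
  have hco : ∀ j, ((C a * X ^ (2 * k) - C b * X ^ k + C c) * p).coeff j
      = (if 2 * k ≤ j then a * p.coeff (j - 2 * k) else 0)
        - (if k ≤ j then b * p.coeff (j - k) else 0) + c * p.coeff j := by
    intro j
    rw [add_mul, sub_mul, coeff_add, coeff_sub, mul_assoc, mul_assoc,
      X_pow_mul, X_pow_mul, coeff_C_mul, coeff_C_mul, coeff_C_mul,
      coeff_mul_X_pow', coeff_mul_X_pow']
    simp [mul_ite]
  constructor
  · rw [hco]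
    rw [if_pos (by omega), if_pos (by omega),
      show n + 2 * k - 2 * k = n by omega,
      htop (n + 2 * k - k) (by omega), htop (n + 2 * k) (by omega)]
    ring
  · intro j h1 h2
    rw [hco]
    have hz' : ∀ t i : ℕ, 0 < t → t < ℓ + k → t ≠ k → i = n - t → p.coeff i = 0 := by
      rintro t i ht1 ht2 ht3 rfl; exact hz t ht1 ht2 ht3
    rcases lt_trichotomy j n with hj | hj | hj
    · have h2k : 2 * k ≤ j := by omega
      rw [if_pos h2k, if_pos (by omega),
        hz' (n - j + 2 * k) (j - 2 * k) (by omega) (by omega) (by omega) (by omega),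
        hz' (n - j + k) (j - k) (by omega) (by omega) (by omega) (by omega),
        hz' (n - j) j (by omega) (by omega) (by omega) (by omega)]
      ring
    · rw [if_pos (by omega), if_pos (by omega), hj,
        hz' (2 * k) (n - 2 * k) (by omega) (by omega) (by omega) (by omega),
        show n - k = n - k from rfl]
      rw [show (a * 0 - b * p.coeff (n - k) + c * p.coeff n : ℂ) = c * a - b ^ 2 by
        rw [← ha, ← hb]; ring, hca]
      ring
    · rcases lt_trichotomy j (n + k) with hj2 | hj2 | hj2
      · rw [if_pos (by omega), if_pos (by omega),
          hz' (n + 2 * k - j) (j - 2 * k) (by omega) (by omega) (by omega) (by omega),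
          hz' (n + k - j) (j - k) (by omega) (by omega) (by omega) (by omega),
          htop j hj]
        ring
      · rw [if_pos (by omega), if_pos (by omega),
          show j - 2 * k = n - k by omega, show j - k = n by omega,
          htop j hj, ← ha, ← hb]
        ring
      · rw [if_pos (by omega), if_pos (by omega),
          hz' (n + 2 * k - j) (j - 2 * k) (by omega) (by omega) (by omega) (by omega),
          htop (j - k) (by omega), htop j hj]
        ring
end

section
/- Let p(z) = Σ_{j=0}^n a_j z^j with a_n ≠ 0 and let k, ℓ be the smallest positive integers with a_{n-k} ≠ 0 and a_{n-k-ℓ} ≠ 0. If ℓ < k, then in the product q_1(z) = (a_n z^{k+ℓ} − a_{n-k} z^ℓ − a_{n-k-ℓ}) p(z), all coefficients of z^j for n ≤ j < n + k + ℓ vanish; i.e., q_1 has leading term a_n^2 z^{n+k+ℓ} followed by at least k + ℓ consecutive zero coefficients. -/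
open Polynomial

lemma aux_coeff_q1 (a : ℂ) (m j : ℕ) (p : Polynomial ℂ) :
    (C a * X ^ m * p).coeff j = if m ≤ j then a * p.coeff (j - m) else 0 := by
  rw [mul_assoc, coeff_C_mul, X_pow_mul, coeff_mul_X_pow']
  split <;> simp

/-- Case `ℓ < k`: `q₁ = (aₙ z^{k+ℓ} - a_{n-k} z^ℓ - a_{n-k-ℓ}) p` has leading term
`aₙ² z^{n+k+ℓ}` followed by at least `k + ℓ` consecutive zero coefficients. -/
theorem q1_leading_zero_coefficients
    (p : Polynomial ℂ) (n : ℕ) (hp : p ≠ 0) (hn : p.natDegree = n)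
    (k ℓ : ℕ) (hk : 0 < k) (hℓ : 0 < ℓ) (hlk : ℓ < k) (hkl : k + ℓ ≤ n)
    (hknz : p.coeff (n - k) ≠ 0)
    (hkmin : ∀ j, 0 < j → j < k → p.coeff (n - j) = 0)
    (hlnz : p.coeff (n - k - ℓ) ≠ 0)
    (hlmin : ∀ j, 0 < j → j < ℓ → p.coeff (n - k - j) = 0) :
    ((C (p.coeff n) * X ^ (k + ℓ) - C (p.coeff (n - k)) * X ^ ℓ
        - C (p.coeff (n - k - ℓ))) * p).coeff (n + k + ℓ) = p.coeff n ^ 2 ∧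
    ∀ j, n ≤ j → j < n + k + ℓ →
      ((C (p.coeff n) * X ^ (k + ℓ) - C (p.coeff (n - k)) * X ^ ℓ
          - C (p.coeff (n - k - ℓ))) * p).coeff j = 0 := by
  have hz : ∀ m, n < m → p.coeff m = 0 := fun m hm =>
    coeff_eq_zero_of_natDegree_lt (hn ▸ hm)
  have expand : ∀ j, k + ℓ ≤ j →
      ((C (p.coeff n) * X ^ (k + ℓ) - C (p.coeff (n - k)) * X ^ ℓ
          - C (p.coeff (n - k - ℓ))) * p).coeff j
        = p.coeff n * p.coeff (j - (k + ℓ)) - p.coeff (n - k) * p.coeff (j - ℓ)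
          - p.coeff (n - k - ℓ) * p.coeff j := by
    intro j hj
    rw [sub_mul, sub_mul, coeff_sub, coeff_sub, aux_coeff_q1, aux_coeff_q1,
        if_pos hj, if_pos (by omega : ℓ ≤ j), coeff_C_mul]
  constructor
  · rw [expand _ (by omega)]
    have e1 : n + k + ℓ - (k + ℓ) = n := by omega
    have e2 : n + k + ℓ - ℓ = n + k := by omega
    rw [e1, e2, hz (n + k) (by omega), hz (n + k + ℓ) (by omega)]
    ring
  · intro j hj1 hj2
    rw [expand _ (by omega)]
    rcases lt_trichotomy j (n + ℓ) with h | h | h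
    · rcases Nat.eq_or_lt_of_le hj1 with h0 | h0
      · -- j = n
        rw [← h0]
        have e1 : n - (k + ℓ) = n - k - ℓ := by omega
        rw [e1, hkmin ℓ hℓ hlk]
        ring
      · -- n < j < n + ℓ
        set m := ℓ - (j - n) with hm
        have hm1 : 0 < m := by omega
        have hm2 : m < ℓ := by omega
        have e1 : j - (k + ℓ) = n - k - m := by omega
        have e2 : j - ℓ = n - m := by omega
        rw [e1, e2, hlmin m hm1 hm2, hkmin m hm1 (by omega), hz j h0]
        ring
    · -- j = n + ℓ
      subst h
      have e1 : n + ℓ - (k + ℓ) = n - k := by omega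
      have e2 : n + ℓ - ℓ = n := by omega
      rw [e1, e2, hz (n + ℓ) (by omega)]
      ring
    · -- n + ℓ < j < n + k + ℓ
      set m := k + ℓ - (j - n) with hm
      have hm1 : 0 < m := by omega
      have hm2 : m < k := by omega
      have e1 : j - (k + ℓ) = n - m := by omega
      rw [e1, hkmin m hm1 hm2, hz (j - ℓ) (by omega), hz j (by omega)]
      ring
end
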